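/- arXiv:2510.18708 — 7 statements merged into one kernel-verified Lean document; each statement's English description precedes it below -/
import Mathlib

section
/- Let w : 2^D → ℝ be a set function with w(∅)=0 on a finite set D. Suppose a partition (D_1,...,D_K) of D is produced greedily so that at each step k, D_k maximizes (w(D̄_{k-1} ∪ B) − w(D̄_{k-1}))/|B| over nonempty B ⊆ D \ D̄_{k-1}, where D̄_k = D_1 ∪ ... ∪ D_k. Define h*_i = (w(D̄_k) − w(D̄_{k-1}))/|D_k| for each i ∈ D_k. Then for any i ∈ D_k and j ∈ D_{k+1}, h*_i ≥ h*_j. -/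
open Finset

/-- Ordering property of the MDR greedy output: the per-block average marginal
contributions `h*` are nonincreasing across consecutive blocks. -/
theorem mdr_ordering
    {D : Type*} [Fintype D] [DecidableEq D]
    (K : ℕ) (w : Finset D → ℝ) (hw0 : w ∅ = 0)
    (Dk : ℕ → Finset D) (Dbar : ℕ → Finset D)
    (hDbar : ∀ k, Dbar k = (Finset.range k).biUnion Dk)
    (hne : ∀ k < K, (Dk k).Nonempty)
    (hdisj : ∀ k < K, Disjoint (Dk k) (Dbar k))
    (hgreedy : ∀ k < K, ∀ B : Finset D, B.Nonempty → Disjoint B (Dbar k) →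
      (w (Dbar k ∪ B) - w (Dbar k)) / (B.card : ℝ) ≤
        (w (Dbar (k + 1)) - w (Dbar k)) / ((Dk k).card : ℝ))
    (hstar : D → ℝ)
    (hhstar : ∀ k < K, ∀ i ∈ Dk k,
      hstar i = (w (Dbar (k + 1)) - w (Dbar k)) / ((Dk k).card : ℝ)) :
    ∀ k : ℕ, k + 1 < K → ∀ i ∈ Dk k, ∀ j ∈ Dk (k + 1), hstar j ≤ hstar i := by
  intro k hk1 i hi j hj
  have hkK : k < K := Nat.lt_of_succ_lt hk1
  -- cards
  have hm : (0:ℝ) < ((Dk k).card : ℝ) := by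
    exact_mod_cast Finset.card_pos.mpr (hne k hkK)
  have hn : (0:ℝ) < ((Dk (k+1)).card : ℝ) := by
    exact_mod_cast Finset.card_pos.mpr (hne (k+1) hk1)
  -- Dbar succ
  have hsucc : ∀ r, Dbar (r+1) = Dbar r ∪ Dk r := by
    intro r
    rw [hDbar, hDbar, Finset.range_add_one, Finset.biUnion_insert, Finset.union_comm]
  -- disjointness facts
  have hd1 : Disjoint (Dk (k+1)) (Dbar k ∪ Dk k) := by
    have := hdisj (k+1) hk1
    rwa [hsucc k] at this
  have hdkk : Disjoint (Dk k) (Dk (k+1)) :=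
    (Finset.disjoint_union_right.mp hd1).2.symm
  have hdbk : Disjoint (Dk (k+1)) (Dbar k) :=
    (Finset.disjoint_union_right.mp hd1).1
  set B := Dk k ∪ Dk (k+1) with hB
  have hBne : B.Nonempty := (hne k hkK).mono Finset.subset_union_left
  have hBdisj : Disjoint B (Dbar k) := by
    rw [hB, Finset.disjoint_union_left]
    exact ⟨(hdisj k hkK), hdbk⟩
  have hBcard : (B.card : ℝ) = ((Dk k).card : ℝ) + ((Dk (k+1)).card : ℝ) := by
    rw [hB, Finset.card_union_of_disjoint hdkk]; push_cast; ring
  have hBunion : Dbar k ∪ B = Dbar (k+2) := by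
    rw [hsucc (k+1), hsucc k, hB, Finset.union_assoc]
  have hg := hgreedy k hkK B hBne hBdisj
  rw [hBunion, hBcard] at hg
  -- express hstar values
  have hi' := hhstar k hkK i hi
  have hj' := hhstar (k+1) hk1 j hj
  rw [hi', hj']
  rw [div_le_div_iff₀ (by linarith) hm] at hg
  rw [div_le_div_iff₀ hn hm]
  nlinarith [hg, hm, hn]
end

section
/- Let w : 2^D → ℝ be supermodular (convex) with w(∅)=0, and let (D_1,...,D_K) be the greedy MDR partition with D̄_k = D_1 ∪ ... ∪ D_k. Define h*_i = (w(D̄_k) − w(D̄_{k-1}))/|D_k| for i ∈ D_k. Then for every B ⊆ D, the sum of h*_i over i ∈ B is at least w(B); that is, h* satisfies all relaxed core constraints. -/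
open Finset

lemma supermodular_sets
    {D : Type*} [Fintype D] [DecidableEq D]
    (w : Finset D → ℝ)
    (hsuper : ∀ (A B : Finset D) (x : D), A ⊆ B → x ∉ B →
      w (insert x A) - w A ≤ w (insert x B) - w B) :
    ∀ (S A C : Finset D), A ⊆ C → Disjoint S C →
      w (A ∪ S) - w A ≤ w (C ∪ S) - w C := by
  intro S
  induction S using Finset.induction_on with
  | empty => intro A C _ _; simp
  | @insert x S hxS ih =>
    intro A C hAC hdis
    have hxC : x ∉ C := by
      have := Finset.disjoint_left.mp hdis (Finset.mem_insert_self x S)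
      exact this
    have hSC : Disjoint S C := by
      exact Finset.disjoint_of_subset_left (Finset.subset_insert x S) hdis
    have h1 := ih A C hAC hSC
    have h2 := hsuper (A ∪ S) (C ∪ S) x (Finset.union_subset_union hAC (le_refl S))
      (by
        simp only [Finset.mem_union]
        rintro (h | h)
        · exact hxC h
        · exact hxS h)
    have e1 : A ∪ insert x S = insert x (A ∪ S) := Finset.union_insert x _ _
    have e2 : C ∪ insert x S = insert x (C ∪ S) := Finset.union_insert x _ _
    rw [e1, e2]
    linarith

/-- The MDR greedy deficit vector `h*` satisfies all relaxed core constraints of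
a supermodular (convex) set function `w` with `w ∅ = 0`:
`∑_{i ∈ B} h*_i ≥ w B` for every `B ⊆ D`. -/
theorem mdr_achievable
    {D : Type*} [Fintype D] [DecidableEq D]
    (K : ℕ) (w : Finset D → ℝ) (hw0 : w ∅ = 0)
    (hsuper : ∀ (A B : Finset D) (x : D), A ⊆ B → x ∉ B →
      w (insert x A) - w A ≤ w (insert x B) - w B)
    (Dk : ℕ → Finset D) (Dbar : ℕ → Finset D)
    (hDbar : ∀ k, Dbar k = (Finset.range k).biUnion Dk)
    (hne : ∀ k < K, (Dk k).Nonempty)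
    (hdisj : ∀ k < K, Disjoint (Dk k) (Dbar k))
    (hgreedy : ∀ k < K, ∀ B : Finset D, B.Nonempty → Disjoint B (Dbar k) →
      (w (Dbar k ∪ B) - w (Dbar k)) / (B.card : ℝ) ≤
        (w (Dbar (k + 1)) - w (Dbar k)) / ((Dk k).card : ℝ))
    (hcover : Dbar K = Finset.univ)
    (hstar : D → ℝ)
    (hhstar : ∀ k < K, ∀ i ∈ Dk k,
      hstar i = (w (Dbar (k + 1)) - w (Dbar k)) / ((Dk k).card : ℝ)) :
    ∀ B : Finset D, w B ≤ ∑ i ∈ B, hstar i := by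
  have key : ∀ k, k ≤ K → ∀ B : Finset D, B ⊆ Dbar k → w B ≤ ∑ i ∈ B, hstar i := by
    intro k
    induction k with
    | zero =>
      intro _ B hB
      have : B = ∅ := by
        rw [hDbar 0] at hB; simpa using Finset.subset_empty.mp (by simpa using hB)
      simp [this, hw0]
    | succ k ih =>
      intro hkK B hB
      have hkK' : k < K := hkK
      have hsplit : Dbar (k+1) = Dbar k ∪ Dk k := by
        rw [hDbar (k+1), hDbar k, Finset.range_add_one, Finset.biUnion_insert,
          Finset.union_comm]
      set Bk := B ∩ Dk k with hBk
      set B' := B \ Dk k with hB'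
      have hB'sub : B' ⊆ Dbar k := by
        intro x hx
        rw [hB'] at hx
        have hxB := Finset.mem_sdiff.mp hx
        have := hB hxB.1
        rw [hsplit] at this
        rcases Finset.mem_union.mp this with h | h
        · exact h
        · exact absurd h hxB.2
      have hBunion : B = B' ∪ Bk := by
        ext x; simp only [hB', hBk, Finset.mem_union, Finset.mem_sdiff, Finset.mem_inter]
        tauto
      have hBdisj : Disjoint B' Bk := by
        rw [hB', hBk]
        exact Finset.disjoint_of_subset_right (Finset.inter_subset_right)
          (Finset.sdiff_disjoint)
      have hBkDk : Bk ⊆ Dk k := Finset.inter_subset_right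
      have hBkDbar : Disjoint Bk (Dbar k) :=
        Finset.disjoint_of_subset_left hBkDk (hdisj k hkK')
      -- supermodularity: w B - w B' ≤ w (Dbar k ∪ Bk) - w (Dbar k)
      have h1 : w (B' ∪ Bk) - w B' ≤ w (Dbar k ∪ Bk) - w (Dbar k) :=
        supermodular_sets w hsuper Bk B' (Dbar k) hB'sub hBkDbar
      -- greedy bound
      set r := (w (Dbar (k + 1)) - w (Dbar k)) / ((Dk k).card : ℝ) with hr
      have h2 : w (Dbar k ∪ Bk) - w (Dbar k) ≤ (Bk.card : ℝ) * r := by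
        rcases Finset.eq_empty_or_nonempty Bk with he | hne'
        · simp [he, hw0]
        · have hc : (0 : ℝ) < (Bk.card : ℝ) := by
            exact_mod_cast Finset.card_pos.mpr hne'
          have := hgreedy k hkK' Bk hne' hBkDbar
          rw [div_le_iff₀ hc] at this
          linarith [this]
      have h3 : ∑ i ∈ Bk, hstar i = (Bk.card : ℝ) * r := by
        rw [Finset.sum_congr rfl (fun i hi => hhstar k hkK' i (hBkDk hi))]
        simp [mul_comm, hr]
      have h4 : w B' ≤ ∑ i ∈ B', hstar i := ih (le_of_lt hkK') B' hB'sub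
      rw [hBunion, Finset.sum_union hBdisj]
      calc w (B' ∪ Bk) ≤ w B' + (w (Dbar k ∪ Bk) - w (Dbar k)) := by linarith
        _ ≤ ∑ i ∈ B', hstar i + (Bk.card : ℝ) * r := by linarith
        _ = ∑ i ∈ B', hstar i + ∑ i ∈ Bk, hstar i := by rw [h3]
  intro B
  exact key K (le_refl K) B (by rw [hcover]; exact Finset.subset_univ B)
end

section
/- Let w : 2^D → ℝ be supermodular with w(∅)=0, let (D_1,...,D_K) be the MDR greedy partition, and let h* be the associated deficit vector defined by h*_i = (w(D̄_k) − w(D̄_{k-1}))/|D_k| for i ∈ D_k. Then h* Lorenz dominates every vector h ∈ ℝ^D satisfying the relaxed core constraints Σ_{i∈B} h_i ≥ w(B) for all B ⊆ D; i.e., for every k ∈ {1,...,|D|}, the sum of the k largest components of h* is at most the sum of the k largest components of h. -/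
open Finset

/-- Sum of the `k` largest entries of a list of reals. -/
noncomputable def topSumList (l : List ℝ) (k : ℕ) : ℝ :=
  ((l.insertionSort (· ≥ ·)).take k).sum

lemma listSum_le_card_add (l : List ℝ) (c : ℝ) :
    l.sum ≤ (l.length : ℝ) * c + (l.map fun x => max (x - c) 0).sum := by
  induction l with
  | nil => simp
  | cons a l ih =>
    simp only [List.sum_cons, List.length_cons, List.map_cons]
    push_cast
    have h := le_max_left (a - c) 0
    nlinarith [ih]

lemma topSumList_le (l : List ℝ) (m : ℕ) (c : ℝ) (hm : m ≤ l.length) :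
    topSumList l m ≤ (m : ℝ) * c + (l.map fun x => max (x - c) 0).sum := by
  set g : ℝ → ℝ := fun x => max (x - c) 0 with hg
  set s := l.insertionSort (· ≥ ·) with hs
  have hperm : List.Perm s l := List.perm_insertionSort _ l
  have hlen : s.length = l.length := hperm.length_eq
  have h1 : topSumList l m = (s.take m).sum := rfl
  have h2 : (s.take m).length = m := by rw [List.length_take]; omega
  have h3 : (s.take m).sum ≤ ((s.take m).length : ℝ) * c + ((s.take m).map g).sum :=
    listSum_le_card_add _ _
  have h4 : ((s.take m).map g).sum ≤ (s.map g).sum := by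
    conv_rhs => rw [← List.take_append_drop m s]
    rw [List.map_append, List.sum_append]
    have : 0 ≤ ((s.drop m).map g).sum := by
      apply List.sum_nonneg
      intro x hx
      simp only [List.mem_map] at hx
      obtain ⟨y, _, rfl⟩ := hx
      exact le_max_right _ _
    linarith
  have h5 : (s.map g).sum = (l.map g).sum := (hperm.map g).sum_eq
  rw [h1, h2] at *
  linarith

lemma sum_le_sum_take_of_sorted : ∀ (s : List ℝ), List.Pairwise (· ≥ ·) s →
    ∀ t : Multiset ℝ, t ≤ (s : Multiset ℝ) → t.sum ≤ (s.take (Multiset.card t)).sum := by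
  intro s
  induction s with
  | nil =>
    intro _ t ht
    have : t = 0 := by simpa using Multiset.le_zero.mp (by simpa using ht)
    simp [this]
  | cons a s ih =>
    intro hs t ht
    rw [List.pairwise_cons] at hs
    by_cases ha : a ∈ t
    · have h1 : a ::ₘ t.erase a = t := Multiset.cons_erase ha
      have h2 : t.erase a ≤ (s : Multiset ℝ) := by
        have := Multiset.erase_le_erase a ht
        simpa using this
      have h3 := ih hs.2 _ h2
      rw [← h1]
      simp only [Multiset.sum_cons, Multiset.card_cons, List.take_succ_cons, List.sum_cons]
      linarith
    · have h2 : t ≤ (s : Multiset ℝ) := by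
        have := Multiset.erase_le_erase a ht
        rwa [Multiset.erase_of_notMem ha, show ((a :: s : List ℝ) : Multiset ℝ) = a ::ₘ (s : Multiset ℝ) from rfl, Multiset.erase_cons_head] at this
      have h3 := ih hs.2 _ h2
      have hcard : Multiset.card t ≤ s.length := by
        have := Multiset.card_le_card h2
        simpa using this
      refine h3.trans ?_
      rcases Nat.eq_zero_or_pos (Multiset.card t) with h0 | h0
      · simp [h0]
      · obtain ⟨n, hn⟩ : ∃ n, Multiset.card t = n + 1 := ⟨Multiset.card t - 1, by omega⟩
        have hnlen : n < s.length := by omega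
        rw [hn, List.take_succ_cons, List.sum_cons, List.take_succ]
        have hgn : s[n]? = some s[n] := List.getElem?_eq_getElem hnlen
        rw [hgn]
        simp only [Option.toList_some, List.sum_append, List.sum_cons, List.sum_nil]
        have : s[n] ≤ a := hs.1 _ (List.getElem_mem hnlen)
        linarith

lemma topSumList_ge (l : List ℝ) (t : Multiset ℝ) (ht : t ≤ (l : Multiset ℝ)) :
    t.sum ≤ topSumList l (Multiset.card t) := by
  have hperm : List.Perm (l.insertionSort (· ≥ ·)) l := List.perm_insertionSort _ l
  have hcoe : ((l.insertionSort (· ≥ ·) : List ℝ) : Multiset ℝ) = (l : Multiset ℝ) :=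
    Quot.sound hperm
  exact sum_le_sum_take_of_sorted _ (List.pairwise_insertionSort _ l) t (by rw [hcoe]; exact ht)

lemma exists_top_subset {D : Type*} [DecidableEq D] (A : Finset D) (f : D → ℝ) :
    ∀ t : ℕ, t ≤ A.card → ∃ T ⊆ A, T.card = t ∧
      (t : ℝ) * ∑ i ∈ A, f i ≤ (A.card : ℝ) * ∑ i ∈ T, f i := by
  intro t
  induction t with
  | zero => intro _; exact ⟨∅, empty_subset _, card_empty, by simp⟩
  | succ t ih =>
    intro hle
    obtain ⟨T, hTA, hTc, hT⟩ := ih (by omega)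
    have hne : (A \ T).Nonempty := by
      rw [← Finset.card_pos, Finset.card_sdiff_of_subset hTA]; omega
    have hcpos : (0:ℝ) < ((A \ T).card : ℝ) := by
      have := hne.card_pos; positivity
    have havg : ∃ x ∈ A \ T, (∑ i ∈ A \ T, f i) / ((A \ T).card : ℝ) ≤ f x := by
      apply Finset.exists_le_of_sum_le hne
      rw [Finset.sum_const, nsmul_eq_mul, mul_div_cancel₀]
      exact ne_of_gt hcpos
    obtain ⟨x, hx, hxavg⟩ := havg
    have hxavg' : ∑ i ∈ A \ T, f i ≤ ((A \ T).card : ℝ) * f x := by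
      rw [div_le_iff₀ hcpos] at hxavg; linarith [hxavg]
    refine ⟨insert x T, ?_, ?_, ?_⟩
    · exact insert_subset ((mem_sdiff.mp hx).1) hTA
    · rw [card_insert_of_notMem (mem_sdiff.mp hx).2, hTc]
    · have hsum : ∑ i ∈ A \ T, f i = ∑ i ∈ A, f i - ∑ i ∈ T, f i :=
        Finset.sum_sdiff_eq_sub hTA
      have hc : ((A \ T).card : ℝ) = (A.card : ℝ) - (t : ℝ) := by
        rw [Finset.card_sdiff_of_subset hTA, hTc, Nat.cast_sub (by omega : t ≤ A.card)]
      rw [Finset.sum_insert (mem_sdiff.mp hx).2]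
      set n := (A.card : ℝ)
      set S := ∑ i ∈ A, f i
      set s := ∑ i ∈ T, f i
      have hB : S - s ≤ (n - t) * f x := by rw [hsum, hc] at hxavg'; exact hxavg'
      have hnt : (t : ℝ) + 1 ≤ n := by
        have : ((t+1 : ℕ) : ℝ) ≤ (A.card : ℝ) := by exact_mod_cast hle
        push_cast at this; linarith
      push_cast
      nlinarith [hT, hB, mul_le_mul_of_nonneg_right hT (by linarith : (0:ℝ) ≤ n - t - 1)]

lemma finset_sum_toList {α : Type*} (s : Finset α) (f : α → ℝ) :
    (s.toList.map f).sum = ∑ i ∈ s, f i := by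
  rw [← Multiset.sum_coe, ← Multiset.map_coe, Finset.coe_toList]
  rfl
/-- The MDR greedy deficit vector `h*` Lorenz dominates (is weakly majorized by)
every vector `h` satisfying the relaxed core constraints `∑_{i∈B} h_i ≥ w B`. -/
theorem mdr_lorenz_dominant
    {D : Type*} [Fintype D] [DecidableEq D]
    (K : ℕ) (w : Finset D → ℝ) (hw0 : w ∅ = 0)
    (hsuper : ∀ (A B : Finset D) (x : D), A ⊆ B → x ∉ B →
      w (insert x A) - w A ≤ w (insert x B) - w B)
    (Dk : ℕ → Finset D) (Dbar : ℕ → Finset D)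
    (hDbar : ∀ k, Dbar k = (Finset.range k).biUnion Dk)
    (hne : ∀ k < K, (Dk k).Nonempty)
    (hdisj : ∀ k < K, Disjoint (Dk k) (Dbar k))
    (hgreedy : ∀ k < K, ∀ B : Finset D, B.Nonempty → Disjoint B (Dbar k) →
      (w (Dbar k ∪ B) - w (Dbar k)) / (B.card : ℝ) ≤
        (w (Dbar (k + 1)) - w (Dbar k)) / ((Dk k).card : ℝ))
    (hcover : Dbar K = Finset.univ)
    (hstar : D → ℝ)
    (hhstar : ∀ k < K, ∀ i ∈ Dk k,
      hstar i = (w (Dbar (k + 1)) - w (Dbar k)) / ((Dk k).card : ℝ)) :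
    ∀ h : D → ℝ, (∀ B : Finset D, w B ≤ ∑ i ∈ B, h i) →
      ∀ m : ℕ, m ≤ Fintype.card D →
        topSumList (Finset.univ.toList.map hstar) m ≤
          topSumList (Finset.univ.toList.map h) m := by
  intro h hcore m hm
  rcases Nat.eq_zero_or_pos m with rfl | hmpos
  · simp [topSumList]
  classical
  have hDbar0 : Dbar 0 = ∅ := by simp [hDbar]
  have hDbarsucc : ∀ k, Dbar (k+1) = Dbar k ∪ Dk k := by
    intro k
    rw [hDbar, hDbar, Finset.range_add_one, Finset.biUnion_insert, union_comm]
  have hDbarmono : ∀ j k, j ≤ k → Dbar j ⊆ Dbar k := by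
    intro j k hjk
    rw [hDbar, hDbar]
    exact biUnion_subset_biUnion_of_subset_left _ (range_subset_range.mpr hjk)
  have hDksub : ∀ k, Dk k ⊆ Dbar (k+1) := by
    intro k; rw [hDbarsucc]; exact subset_union_right
  have hDkdisj : ∀ j l, j < l → l < K → Disjoint (Dk j) (Dk l) := by
    intro j l hjl hlK
    exact Finset.disjoint_of_subset_left ((hDksub j).trans (hDbarmono _ _ hjl)) (hdisj l hlK).symm
  set r : ℕ → ℝ := fun k => (w (Dbar (k+1)) - w (Dbar k)) / ((Dk k).card : ℝ) with hrdef
  have hcardpos : ∀ k, k < K → (0:ℝ) < ((Dk k).card : ℝ) := by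
    intro k hk; exact_mod_cast (hne k hk).card_pos
  have hstep : ∀ k, k < K → w (Dbar (k+1)) - w (Dbar k) = ((Dk k).card : ℝ) * r k := by
    intro k hk
    rw [hrdef]
    field_simp
  have hcardsucc : ∀ k, k < K → (Dbar (k+1)).card = (Dbar k).card + (Dk k).card := by
    intro k hk
    rw [hDbarsucc, Finset.card_union_of_disjoint (hdisj k hk).symm]
  have hradj : ∀ k, k + 1 < K → r (k+1) ≤ r k := by
    intro k hk1
    have hk : k < K := by omega
    have hB : (Dk k ∪ Dk (k+1)).Nonempty := (hne k hk).mono subset_union_left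
    have hdisjB : Disjoint (Dk k ∪ Dk (k+1)) (Dbar k) := by
      apply Finset.disjoint_union_left.mpr
      exact ⟨hdisj k hk,
        Finset.disjoint_of_subset_right (hDbarmono k (k+1) (by omega)) (hdisj (k+1) hk1)⟩
    have hU : Dbar k ∪ (Dk k ∪ Dk (k+1)) = Dbar (k+2) := by
      rw [hDbarsucc (k+1), hDbarsucc k, union_assoc]
    have hcardB : ((Dk k ∪ Dk (k+1)).card : ℝ) = ((Dk k).card : ℝ) + ((Dk (k+1)).card : ℝ) := by
      rw [Finset.card_union_of_disjoint (hDkdisj k (k+1) (by omega) hk1)]; push_cast; ring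
    have hg := hgreedy k hk _ hB hdisjB
    rw [hU, hcardB] at hg
    have ha := hcardpos k hk
    have hb := hcardpos (k+1) hk1
    have hnum : w (Dbar (k+2)) - w (Dbar k)
        = ((Dk k).card : ℝ) * r k + ((Dk (k+1)).card : ℝ) * r (k+1) := by
      have h1 := hstep k hk
      have h2 := hstep (k+1) hk1
      linarith
    rw [div_le_div_iff₀ (by linarith) ha, hnum] at hg
    have hrk : (w (Dbar (k+1)) - w (Dbar k)) = ((Dk k).card : ℝ) * r k := hstep k hk
    rw [hrk] at hg
    nlinarith [mul_pos ha hb]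
  have hrmono : ∀ j k, j ≤ k → k < K → r k ≤ r j := by
    intro j k hjk
    induction k with
    | zero =>
      intro _
      have : j = 0 := by omega
      subst this; exact le_refl _
    | succ k ih =>
      intro hkK
      rcases Nat.eq_or_lt_of_le hjk with heq | hlt
      · subst heq; exact le_refl _
      · have hj : j ≤ k := by omega
        exact (hradj k hkK).trans (ih hj (by omega))
  have htel : ∀ k, k ≤ K → w (Dbar k) = ∑ j ∈ range k, ((Dk j).card : ℝ) * r j := by
    intro k
    induction k with
    | zero => intro _; simp [hDbar0, hw0]
    | succ k ih =>
      intro hk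
      rw [Finset.sum_range_succ, ← ih (by omega)]
      have := hstep k (by omega)
      linarith
  have hcardtel : ∀ k, k ≤ K → ((Dbar k).card : ℝ) = ∑ j ∈ range k, ((Dk j).card : ℝ) := by
    intro k
    induction k with
    | zero => intro _; simp [hDbar0]
    | succ k ih =>
      intro hk
      rw [Finset.sum_range_succ, ← ih (by omega), hcardsucc k (by omega)]
      push_cast; ring
  have hsum_univ : ∀ g : D → ℝ, ∑ i ∈ univ, g i = ∑ j ∈ range K, ∑ i ∈ Dk j, g i := by
    intro g
    rw [← hcover, hDbar]
    apply Finset.sum_biUnion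
    intro x hx y hy hxy
    simp only [Finset.mem_coe, Finset.mem_range] at hx hy
    rcases lt_or_gt_of_ne hxy with hlt | hgt
    · exact hDkdisj x y hlt hy
    · exact (hDkdisj y x hgt hx).symm
  have hKpos : 0 < K := by
    by_contra hK
    have hK0 : K = 0 := by omega
    subst hK0
    have huniv : (univ : Finset D) = ∅ := by rw [← hcover, hDbar0]
    have : Fintype.card D = 0 := by rw [← Finset.card_univ, huniv, card_empty]
    omega
  have hcardD : (Dbar K).card = Fintype.card D := by rw [hcover, card_univ]
  obtain ⟨k, hkK, hlow, hhigh⟩ : ∃ k, k < K ∧ (Dbar k).card ≤ m ∧ m ≤ (Dbar (k+1)).card := by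
    set k0 := Nat.findGreatest (fun k => (Dbar k).card ≤ m) K with hk0
    have hPk0 : (Dbar k0).card ≤ m :=
      Nat.findGreatest_spec (P := fun k => (Dbar k).card ≤ m) (Nat.zero_le K)
        (by simp [hDbar0])
    have hk0K : k0 ≤ K := Nat.findGreatest_le K
    rcases eq_or_lt_of_le hk0K with heq | hlt
    · refine ⟨K - 1, by omega, ?_, ?_⟩
      · have hsub := hDbarmono (K-1) K (by omega)
        have hcle := Finset.card_le_card hsub
        rw [heq] at hPk0
        omega
      · have hKe : K - 1 + 1 = K := by omega
        rw [hKe, hcardD]; exact hm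
    · refine ⟨k0, hlt, hPk0, ?_⟩
      have hnP : ¬ ((Dbar (k0+1)).card ≤ m) :=
        Nat.findGreatest_is_greatest (P := fun k => (Dbar k).card ≤ m) (n := K) (k := k0 + 1) (by omega) (by omega)
      omega
  set t := m - (Dbar k).card with htdef
  have hm_eq : m = (Dbar k).card + t := by omega
  have htle : t ≤ (Dk k).card := by have := hcardsucc k hkK; omega
  -- upper bound on topsum of hstar
  have hlen1 : (univ.toList.map hstar).length = Fintype.card D := by
    rw [List.length_map, Finset.length_toList, card_univ]
  have hub := topSumList_le (univ.toList.map hstar) m (r k) (by rw [hlen1]; exact hm)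
  have hmapmap : ((univ.toList.map hstar).map fun x => max (x - r k) 0)
      = univ.toList.map (fun i => max (hstar i - r k) 0) := by
    rw [List.map_map]; rfl
  rw [hmapmap, finset_sum_toList] at hub
  have hmaxsum : ∑ i ∈ univ, max (hstar i - r k) 0
      = w (Dbar k) - ((Dbar k).card : ℝ) * r k := by
    rw [hsum_univ]
    have hinner : ∀ j ∈ range K, ∑ i ∈ Dk j, max (hstar i - r k) 0
        = ((Dk j).card : ℝ) * max (r j - r k) 0 := by
      intro j hj
      rw [Finset.mem_range] at hj
      rw [Finset.sum_congr rfl (fun i hi => by rw [hhstar j hj i hi]), Finset.sum_const,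
        nsmul_eq_mul]
    rw [Finset.sum_congr rfl hinner]
    have hzero : ∀ j ∈ range K, j ∉ range k → ((Dk j).card : ℝ) * max (r j - r k) 0 = 0 := by
      intro j hj hjk
      rw [mem_range] at hj hjk
      have : r j ≤ r k := hrmono k j (by omega) hj
      rw [max_eq_right (by linarith), mul_zero]
    rw [← Finset.sum_subset (Finset.range_subset_range.mpr (le_of_lt hkK)) hzero]
    have hposs : ∀ j ∈ range k, ((Dk j).card : ℝ) * max (r j - r k) 0
        = ((Dk j).card : ℝ) * r j - ((Dk j).card : ℝ) * r k := by
      intro j hj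
      rw [mem_range] at hj
      have : r k ≤ r j := hrmono j k (by omega) hkK
      rw [max_eq_left (by linarith)]; ring
    rw [Finset.sum_congr rfl hposs, Finset.sum_sub_distrib, ← Finset.sum_mul,
      ← hcardtel k (le_of_lt hkK), ← htel k (le_of_lt hkK)]
  rw [hmaxsum] at hub
  -- lower bound on topsum of h
  obtain ⟨T, hTsub, hTcard, hTavg⟩ := exists_top_subset (Dk k) h t htle
  have hdisjT : Disjoint (Dbar k) T :=
    Finset.disjoint_of_subset_right hTsub (hdisj k hkK).symm
  have hScard : (Dbar k ∪ T).card = m := by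
    rw [Finset.card_union_of_disjoint hdisjT, hTcard]; omega
  have hmult : ((Dbar k ∪ T).val.map h) ≤ ((univ.toList.map h : List ℝ) : Multiset ℝ) := by
    rw [← Multiset.map_coe, Finset.coe_toList]
    exact Multiset.map_le_map (Finset.val_le_iff.mpr (subset_univ _))
  have hlb := topSumList_ge (univ.toList.map h) ((Dbar k ∪ T).val.map h) hmult
  have hcard2 : Multiset.card ((Dbar k ∪ T).val.map h) = m := by
    rw [Multiset.card_map]; exact hScard
  have hsumS : ((Dbar k ∪ T).val.map h).sum = ∑ i ∈ (Dbar k ∪ T), h i := rfl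
  rw [hcard2, hsumS, Finset.sum_union hdisjT] at hlb
  -- combine
  have hA := hcore (Dbar k)
  have hB := hcore (Dbar (k+1))
  have hsplit : ∑ i ∈ Dbar (k+1), h i = ∑ i ∈ Dbar k, h i + ∑ i ∈ Dk k, h i := by
    rw [hDbarsucc, Finset.sum_union (hdisj k hkK).symm]
  have ha := hcardpos k hkK
  have hrk := hstep k hkK
  have htcast : (m:ℝ) = ((Dbar k).card : ℝ) + (t:ℝ) := by exact_mod_cast hm_eq
  have htlecast : (t:ℝ) ≤ ((Dk k).card : ℝ) := by exact_mod_cast htle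
  refine le_trans hub (le_trans ?_ hlb)
  rw [hsplit] at hB
  have htnn : (0:ℝ) ≤ (t:ℝ) := Nat.cast_nonneg t
  have hmrk : (m:ℝ) * r k = ((Dbar k).card : ℝ) * r k + (t:ℝ) * r k := by
    rw [htcast]; ring
  have h1 : (t:ℝ) * (((Dk k).card : ℝ) * r k) = (t:ℝ) * (w (Dbar (k+1)) - w (Dbar k)) := by
    rw [← hrk]
  have hP1 : (0:ℝ) ≤ (t:ℝ) * ((∑ i ∈ Dbar k, h i) + (∑ i ∈ Dk k, h i) - w (Dbar (k+1))) :=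
    mul_nonneg htnn (by linarith [hB])
  have hP2 : (0:ℝ) ≤ (((Dk k).card : ℝ) - (t:ℝ)) * ((∑ i ∈ Dbar k, h i) - w (Dbar k)) :=
    mul_nonneg (by linarith) (by linarith [hA])
  have hgoal : ((Dk k).card : ℝ) * ((w (Dbar k)) + (t:ℝ) * r k)
      ≤ ((Dk k).card : ℝ) * ((∑ i ∈ Dbar k, h i) + ∑ i ∈ T, h i) := by
    nlinarith [h1, hTavg, hP1, hP2]
  have hfin := le_of_mul_le_mul_left hgoal ha
  linarith [hfin, hmrk]
end

section
/- Let h* ∈ ℝ^D satisfy the relaxed core constraints for a supermodular w with binding constraints on the nested chain D̄_1 ⊂ D̄_2 ⊂ ... ⊂ D̄_K = D (i.e., h*(D̄_k) = w(D̄_k) for all k), and suppose h* is constant on each block D_k = D̄_k \ D̄_{k-1}. If ĥ is an integer vector with ĥ_i ∈ {⌊h*_i⌋, ⌈h*_i⌉} for all i, ĥ(D̄_k) = w(D̄_k) for all k, and ĥ satisfies the relaxed core constraints, then ĥ Lorenz dominates every integer vector h satisfying the relaxed core constraints. -/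
open Finset

/-- Sum of the `k` largest entries of a list of integers. -/
def topSumListZ (l : List ℤ) (k : ℕ) : ℤ :=
  ((l.insertionSort (· ≥ ·)).take k).sum

/- ### Auxiliary lemmas -/

private lemma take_sum_add_le (s : List ℤ) (θ : ℤ) :
    ∀ (k a : ℕ), a + k ≤ s.length →
      (∀ (j : ℕ) (hj : j < s.length), a ≤ j → j < a + k → θ ≤ s[j]) →
      (s.take a).sum + (k : ℤ) * θ ≤ (s.take (a + k)).sum := by
  intro k
  induction k with
  | zero => intro a _ _; simp
  | succ k ih =>
    intro a hlen hθ
    have h1 : a + k < s.length := by omega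
    have h2 := List.sum_take_succ s (a + k) h1
    have h3 := ih a (by omega) (fun j hj hja hjk => hθ j hj hja (by omega))
    have h4 := hθ (a + k) h1 (by omega) (by omega)
    have he : a + (k + 1) = (a + k) + 1 := by omega
    rw [he, h2]
    push_cast
    linarith

private lemma take_sum_le_add (s : List ℤ) (θ : ℤ) :
    ∀ (k a : ℕ), a + k ≤ s.length →
      (∀ (j : ℕ) (hj : j < s.length), a ≤ j → j < a + k → s[j] ≤ θ) →
      (s.take (a + k)).sum ≤ (s.take a).sum + (k : ℤ) * θ := by
  intro k
  induction k with
  | zero => intro a _ _; simp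
  | succ k ih =>
    intro a hlen hθ
    have h1 : a + k < s.length := by omega
    have h2 := List.sum_take_succ s (a + k) h1
    have h3 := ih a (by omega) (fun j hj hja hjk => hθ j hj hja (by omega))
    have h4 := hθ (a + k) h1 (by omega) (by omega)
    have he : a + (k + 1) = (a + k) + 1 := by omega
    rw [he, h2]
    push_cast
    linarith

private lemma sorted_getElem_le (s : List ℤ) (hs : s.Pairwise (· ≥ ·)) {i j : ℕ}
    (hij : i ≤ j) (hj : j < s.length) :
    s[j] ≤ s[i]'(by omega) := by
  have := List.Pairwise.rel_get_of_le hs (a := ⟨i, by omega⟩) (b := ⟨j, hj⟩)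
    (Fin.mk_le_mk.mpr hij)
  simpa [List.get_eq_getElem] using this

private lemma sublist_sum_le_take : ∀ {t s : List ℤ}, t.Sublist s → s.Pairwise (· ≥ ·) →
    t.sum ≤ (s.take t.length).sum := by
  intro t s h
  induction h with
  | slnil => intro _; simp
  | @cons l₁ l₂ a h ih =>
    intro hs
    have hs' : l₂.Pairwise (· ≥ ·) := (List.pairwise_cons.mp hs).2
    have ha : ∀ b ∈ l₂, a ≥ b := (List.pairwise_cons.mp hs).1
    rcases Nat.eq_zero_or_pos l₁.length with h0 | hpos
    · rw [h0]
      rw [List.eq_nil_of_length_eq_zero h0]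
      simp
    · obtain ⟨k, hk⟩ : ∃ k, l₁.length = k + 1 := ⟨l₁.length - 1, by omega⟩
      have hlen : k + 1 ≤ l₂.length := hk ▸ h.length_le
      have hkl : k < l₂.length := by omega
      have hts : (l₂.take (k + 1)).sum = (l₂.take k).sum + l₂[k] :=
        List.sum_take_succ _ k hkl
      have h2 : l₂[k] ≤ a := ha _ (List.getElem_mem hkl)
      have h3 := ih hs'
      rw [hk] at h3 ⊢
      rw [List.take_succ_cons, List.sum_cons]
      rw [hts] at h3
      linarith
  | @cons_cons l₁ l₂ a h ih =>
    intro hs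
    have hs' : l₂.Pairwise (· ≥ ·) := (List.pairwise_cons.mp hs).2
    have h3 := ih hs'
    simp only [List.length_cons, List.take_succ_cons, List.sum_cons]
    linarith

private lemma toList_map_sum {D : Type*} [DecidableEq D] (B : Finset D) (f : D → ℤ) :
    (B.toList.map f).sum = ∑ i ∈ B, f i := by
  rw [Finset.sum_eq_multiset_sum]
  conv_rhs => rw [(Finset.coe_toList B).symm]
  rw [Multiset.map_coe, Multiset.sum_coe]

private lemma sum_le_topSum {D : Type*} [Fintype D] [DecidableEq D] (f : D → ℤ) (B : Finset D) :
    ∑ i ∈ B, f i ≤ topSumListZ (Finset.univ.toList.map f) B.card := by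
  classical
  unfold topSumListZ
  set l := Finset.univ.toList.map f with hl
  set s := l.insertionSort (· ≥ ·) with hs
  have hsorted : s.Pairwise (· ≥ ·) := List.pairwise_insertionSort _ _
  have hperm : s.Perm l := List.perm_insertionSort _ _
  have hsub : (B.toList.map f).Subperm s := by
    rw [← Multiset.coe_le]
    have h1 : (↑s : Multiset ℤ) = ↑l := Multiset.coe_eq_coe.mpr hperm
    rw [h1, hl]
    have h2 : (↑(B.toList.map f) : Multiset ℤ) = Multiset.map f B.val := by
      rw [(Finset.coe_toList B).symm, Multiset.map_coe]
    have h3 : (↑(Finset.univ.toList.map f) : Multiset ℤ)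
        = Multiset.map f (Finset.univ.val : Multiset D) := by
      rw [(Finset.coe_toList Finset.univ).symm, Multiset.map_coe]
    rw [h2, h3]
    exact Multiset.map_le_map (Finset.val_le_iff.mpr (Finset.subset_univ B))
  obtain ⟨t', ht'perm, ht'sub⟩ := hsub
  have hlen' : t'.length = B.card := by
    rw [ht'perm.length_eq, List.length_map, Finset.length_toList]
  have hsum' : t'.sum = ∑ i ∈ B, f i := by
    rw [ht'perm.sum_eq, toList_map_sum]
  have hfin := sublist_sum_le_take ht'sub hsorted
  rw [hlen', hsum'] at hfin
  exact hfin

private lemma exists_good_subset {D : Type*} [DecidableEq D] (Y : Finset D) (z : D → ℤ)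
    (R : ℕ) (hR : R ≤ Y.card) :
    ∃ T ⊆ Y, T.card = R ∧ min (R : ℤ) (∑ i ∈ Y, z i) ≤ ∑ i ∈ T, z i := by
  classical
  set P := Y.filter (fun i => 1 ≤ z i) with hP
  by_cases hc : R ≤ P.card
  · obtain ⟨T, hTP, hTcard⟩ := Finset.exists_subset_card_eq hc
    refine ⟨T, hTP.trans (Finset.filter_subset _ _), hTcard, ?_⟩
    have h1 : (R : ℤ) ≤ ∑ i ∈ T, z i := by
      calc (R : ℤ) = ∑ _i ∈ T, (1 : ℤ) := by rw [Finset.sum_const, hTcard]; simp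
      _ ≤ ∑ i ∈ T, z i :=
        Finset.sum_le_sum (fun i hi => (Finset.mem_filter.mp (hTP hi)).2)
    exact le_trans (min_le_left _ _) h1
  · push_neg at hc
    obtain ⟨T, hPT, hTY, hTcard⟩ :=
      Finset.exists_subsuperset_card_eq (Finset.filter_subset _ Y) (le_of_lt hc) hR
    refine ⟨T, hTY, hTcard, ?_⟩
    have hz : ∀ i ∈ Y \ T, z i ≤ 0 := by
      intro i hi
      rcases Finset.mem_sdiff.mp hi with ⟨hiY, hiT⟩
      by_contra hzi
      push_neg at hzi
      exact hiT (hPT (Finset.mem_filter.mpr ⟨hiY, by omega⟩))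
    have h2 : ∑ i ∈ Y, z i ≤ ∑ i ∈ T, z i := by
      have h3 := Finset.sum_sdiff hTY (f := z)
      have h0 : ∑ i ∈ Y \ T, z i ≤ 0 := Finset.sum_nonpos hz
      linarith
    exact le_trans (min_le_right _ _) h2

private lemma lsl {D : Type*} [DecidableEq D] [Fintype D] (hhat h : D → ℤ) (θ : ℤ)
    (A S : Finset D) (hAS : A ⊆ S) (W : Finset D)
    (hWdef : W = Finset.univ.filter (fun i => θ ≤ hhat i))
    (hAW : A ⊆ W) (hWS : W ⊆ S)
    (hdich : ∀ i ∈ S \ A, hhat i = θ - 1 ∨ hhat i = θ)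
    (hA : ∑ i ∈ A, hhat i ≤ ∑ i ∈ A, h i)
    (hS : ∑ i ∈ S, hhat i ≤ ∑ i ∈ S, h i) :
    ∃ B : Finset D, B.card = W.card ∧ ∑ i ∈ W, hhat i ≤ ∑ i ∈ B, h i := by
  classical
  set Y := S \ A with hY
  have hWmem : ∀ i, i ∈ W ↔ θ ≤ hhat i := by
    intro i; rw [hWdef]; simp
  have hWA_sub : W \ A ⊆ Y := Finset.sdiff_subset_sdiff hWS (le_refl A)
  set R := (W \ A).card with hRdef
  have hWA_val : ∀ i ∈ W \ A, hhat i = θ := by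
    intro i hi
    have h1 := hdich i (hWA_sub hi)
    have h2 := (hWmem i).mp (Finset.mem_sdiff.mp hi).1
    omega
  have hYW_val : ∀ i ∈ Y \ (W \ A), hhat i = θ - 1 := by
    intro i hi
    rcases Finset.mem_sdiff.mp hi with ⟨hiY, hniWA⟩
    rcases Finset.mem_sdiff.mp hiY with ⟨hiS, hniA⟩
    have h1 := hdich i hiY
    have h2 : i ∉ W := fun hWm => hniWA (Finset.mem_sdiff.mpr ⟨hWm, hniA⟩)
    have h3 : ¬ θ ≤ hhat i := fun hx => h2 ((hWmem i).mpr hx)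
    omega
  have hsumWA : ∑ i ∈ W \ A, hhat i = (R : ℤ) * θ := by
    rw [Finset.sum_congr rfl hWA_val, Finset.sum_const, nsmul_eq_mul]
  have hsumW : ∑ i ∈ W, hhat i = ∑ i ∈ A, hhat i + (R : ℤ) * θ := by
    rw [← Finset.sum_sdiff hAW, hsumWA]; ring
  have hRY : R ≤ Y.card := Finset.card_le_card hWA_sub
  have hcast : ((Y.card - R : ℕ) : ℤ) = (Y.card : ℤ) - R := by
    rw [Nat.cast_sub hRY]
  have hsumY : ∑ i ∈ Y, hhat i = (R : ℤ) * θ + ((Y.card : ℤ) - R) * (θ - 1) := by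
    rw [← Finset.sum_sdiff hWA_sub, hsumWA, Finset.sum_congr rfl hYW_val,
      Finset.sum_const, nsmul_eq_mul, Finset.card_sdiff_of_subset hWA_sub, hcast]
    ring
  have hsumYS : ∑ i ∈ Y, hhat i = ∑ i ∈ S, hhat i - ∑ i ∈ A, hhat i := by
    rw [hY, ← Finset.sum_sdiff hAS]; ring
  obtain ⟨T, hTY, hTcard, hTz⟩ := exists_good_subset Y (fun i => h i - (θ - 1)) R hRY
  set E : ℤ := ∑ i ∈ A, h i - ∑ i ∈ A, hhat i with hE
  have hE0 : 0 ≤ E := by rw [hE]; linarith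
  have hYh : ∑ i ∈ Y, h i = ∑ i ∈ S, h i - ∑ i ∈ A, h i := by
    rw [hY, ← Finset.sum_sdiff hAS]; ring
  have hYz : ∑ i ∈ Y, (h i - (θ - 1)) = ∑ i ∈ Y, h i - (Y.card : ℤ) * (θ - 1) := by
    rw [Finset.sum_sub_distrib, Finset.sum_const, nsmul_eq_mul]
  have hTzsum : ∑ i ∈ T, (h i - (θ - 1)) = ∑ i ∈ T, h i - (R : ℤ) * (θ - 1) := by
    rw [Finset.sum_sub_distrib, Finset.sum_const, nsmul_eq_mul, hTcard]
  have step1 : ∑ i ∈ Y, hhat i - E ≤ ∑ i ∈ Y, h i := by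
    rw [hYh, hsumYS, hE]; linarith
  have step2 : (R : ℤ) - E ≤ ∑ i ∈ Y, (h i - (θ - 1)) := by
    rw [hYz]
    have hh : (R : ℤ) * θ + ((Y.card : ℤ) - R) * (θ - 1) - E - (Y.card : ℤ) * (θ - 1)
        = (R : ℤ) - E := by ring
    rw [hsumY] at step1
    linarith
  have hmin : (R : ℤ) - E ≤ min (R : ℤ) (∑ i ∈ Y, (h i - (θ - 1))) :=
    le_min (by linarith) step2
  have hTh : (R : ℤ) * θ - E ≤ ∑ i ∈ T, h i := by
    have h5 := le_trans hmin hTz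
    rw [hTzsum] at h5; linarith
  have hdisjAT : Disjoint A T := by
    rw [Finset.disjoint_left]
    intro i hiA hiT
    exact (Finset.mem_sdiff.mp (hTY hiT)).2 hiA
  refine ⟨A ∪ T, ?_, ?_⟩
  · rw [Finset.card_union_of_disjoint hdisjAT, hTcard]
    have h6 : R = W.card - A.card := by rw [hRdef, Finset.card_sdiff_of_subset hAW]
    have h7 : A.card ≤ W.card := Finset.card_le_card hAW
    omega
  · rw [Finset.sum_union hdisjAT]
    have h8 : ∑ i ∈ A, h i = ∑ i ∈ A, hhat i + E := by rw [hE]; ring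
    rw [hsumW, h8]
    linarith

private lemma transfer {D : Type*} [Fintype D] [DecidableEq D] (f : D → ℤ)
    (p : ℤ → Prop) [DecidablePred p] :
    (Finset.univ.toList.map f).countP (fun x => decide (p x))
        = (Finset.univ.filter (fun i => p (f i))).card ∧
    ((Finset.univ.toList.map f).filter (fun x => decide (p x))).sum
        = ∑ i ∈ Finset.univ.filter (fun i => p (f i)), f i := by
  classical
  have hval := (Finset.coe_toList (Finset.univ : Finset D)).symm
  have hfilter : (Finset.univ.filter (fun i => p (f i))).val
      = ↑(Finset.univ.toList.filter (fun i => decide (p (f i)))) := by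
    rw [Finset.filter_val, hval, Multiset.filter_coe]
  have hlistfil : (Finset.univ.toList.map f).filter (fun x => decide (p x))
      = (Finset.univ.toList.filter (fun i => decide (p (f i)))).map f := by
    rw [List.filter_map]
    rfl
  constructor
  · rw [List.countP_map, List.countP_eq_length_filter]
    have : (Finset.univ.filter (fun i => p (f i))).card
        = Multiset.card (Finset.univ.filter (fun i => p (f i))).val := rfl
    rw [this, hfilter, Multiset.coe_card]
    rfl
  · rw [hlistfil, Finset.sum_eq_multiset_sum, hfilter, Multiset.map_coe, Multiset.sum_coe]

private lemma sorted_take_facts (s : List ℤ) (m : ℕ) (θ : ℤ) (hm1 : 1 ≤ m)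
    (hm : m ≤ s.length)
    (hlow : ∀ (j : ℕ) (hj : j < s.length), j < m → θ ≤ s[j])
    (hhigh : ∀ (j : ℕ) (hj : j < s.length), m ≤ j → s[j] ≤ θ) :
    s.countP (fun x => decide (θ + 1 ≤ x)) ≤ m ∧
    m ≤ s.countP (fun x => decide (θ ≤ x)) ∧
    (s.take m).sum ≤ (s.filter (fun x => decide (θ + 1 ≤ x))).sum
      + ((m : ℤ) - (s.countP (fun x => decide (θ + 1 ≤ x)) : ℤ)) * θ := by
  set p : ℤ → Bool := fun x => decide (θ + 1 ≤ x) with hp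
  have hdropP : ∀ a ∈ s.drop m, ¬ p a = true := by
    intro a ha
    obtain ⟨j, hj, hja⟩ := List.mem_iff_getElem.mp ha
    have hjs : m + j < s.length := by
      have := List.length_drop (i := m) (l := s)
      omega
    have : a = s[m + j] := by rw [← hja, List.getElem_drop]
    have hb := hhigh (m + j) hjs (by omega)
    rw [hp]
    simp only [decide_eq_true_eq]
    omega
  have htakelen : (s.take m).length = m := by rw [List.length_take]; omega
  have htakeP : ∀ a ∈ s.take m, θ ≤ a := by
    intro a ha
    obtain ⟨j, hj, hja⟩ := List.mem_iff_getElem.mp ha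
    have hjm : j < m := by rw [htakelen] at hj; omega
    have hjs : j < s.length := by omega
    have : a = s[j] := by rw [← hja, List.getElem_take]
    have hb := hlow j hjs hjm
    omega
  have hcnt_split : s.countP p = (s.take m).countP p + (s.drop m).countP p := by
    conv_lhs => rw [← List.take_append_drop m s]
    rw [List.countP_append]
  have hdrop0 : (s.drop m).countP p = 0 := List.countP_eq_zero.mpr hdropP
  have hcnt_take : s.countP p = (s.take m).countP p := by omega
  have hfact1 : s.countP p ≤ m := by
    rw [hcnt_take]
    calc (s.take m).countP p ≤ (s.take m).length := List.countP_le_length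
    _ = m := htakelen
  have hfact2 : m ≤ s.countP (fun x => decide (θ ≤ x)) := by
    have h1 : (s.take m).countP (fun x => decide (θ ≤ x)) = m := by
      rw [List.countP_eq_length.mpr (by
        intro a ha
        simp only [decide_eq_true_eq]
        exact htakeP a ha), htakelen]
    have h2 : s.countP (fun x => decide (θ ≤ x))
        = (s.take m).countP (fun x => decide (θ ≤ x))
          + (s.drop m).countP (fun x => decide (θ ≤ x)) := by
      conv_lhs => rw [← List.take_append_drop m s]
      rw [List.countP_append]
    omega
  refine ⟨hfact1, hfact2, ?_⟩
  -- sum bound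
  have hperm := List.filter_append_perm p (s.take m)
  have hsum_split : (s.take m).sum
      = ((s.take m).filter p).sum + ((s.take m).filter (fun x => !p x)).sum := by
    rw [← hperm.sum_eq, List.sum_append]
  have hfil_eq : s.filter p = (s.take m).filter p := by
    conv_lhs => rw [← List.take_append_drop m s]
    rw [List.filter_append, List.filter_eq_nil_iff.mpr hdropP, List.append_nil]
  have hlen_neg : ((s.take m).filter (fun x => !p x)).length = m - s.countP p := by
    have h1 : ((s.take m).filter p).length + ((s.take m).filter (fun x => !p x)).length
        = m := by
      have := hperm.length_eq
      rw [List.length_append] at this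
      omega
    have h2 : ((s.take m).filter p).length = s.countP p := by
      rw [← List.countP_eq_length_filter, ← hcnt_take]
    omega
  have hneg_le : ((s.take m).filter (fun x => !p x)).sum
      ≤ (((s.take m).filter (fun x => !p x)).length : ℤ) * θ := by
    have := List.sum_le_card_nsmul ((s.take m).filter (fun x => !p x)) θ (by
      intro x hx
      have hxp := List.of_mem_filter hx
      rw [hp] at hxp
      simp only [Bool.not_eq_true', decide_eq_false_iff_not] at hxp
      omega)
    rwa [nsmul_eq_mul] at this
  rw [hsum_split, ← hfil_eq]
  have hcast2 : (((s.take m).filter (fun x => !p x)).length : ℤ)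
      = (m : ℤ) - (s.countP p : ℤ) := by
    rw [hlen_neg]
    have := hfact1
    push_cast [Nat.cast_sub hfact1]
    ring
  rw [hcast2] at hneg_le
  linarith

/- ### Main theorem -/

/-- An MDR-consistent rounding `ĥ` of the (block-constant, block-nonincreasing)
relaxed-core vector `h*` — i.e. an integer vector taking floor/ceiling values of
`h*`, with binding constraints on the nested chain `D̄_1 ⊂ … ⊂ D̄_K = D` and
satisfying the relaxed core constraints — Lorenz dominates every integer vector
`h` satisfying the relaxed core constraints. -/
theorem mdr_consistent_rounding_lorenz_dominant
    {D : Type*} [Fintype D] [DecidableEq D]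
    (K : ℕ) (w : Finset D → ℤ) (hw0 : w ∅ = 0)
    (hsuper : ∀ (A B : Finset D) (x : D), A ⊆ B → x ∉ B →
      w (insert x A) - w A ≤ w (insert x B) - w B)
    (Dk : ℕ → Finset D) (Dbar : ℕ → Finset D)
    (hDbar : ∀ k, Dbar k = (Finset.range k).biUnion Dk)
    (hne : ∀ k < K, (Dk k).Nonempty)
    (hdisj : ∀ k < K, Disjoint (Dk k) (Dbar k))
    (hcover : Dbar K = Finset.univ)
    (hstar : D → ℝ) (c : ℕ → ℝ)
    (hconst : ∀ k < K, ∀ i ∈ Dk k, hstar i = c k)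
    (hmono : ∀ k, k + 1 < K → c (k + 1) ≤ c k)
    (hstar_core : ∀ B : Finset D, (w B : ℝ) ≤ ∑ i ∈ B, hstar i)
    (hstar_bind : ∀ k ≤ K, ∑ i ∈ Dbar k, hstar i = (w (Dbar k) : ℝ))
    (hhat : D → ℤ)
    (hround : ∀ i : D, hhat i = ⌊hstar i⌋ ∨ hhat i = ⌈hstar i⌉)
    (hhat_bind : ∀ k ≤ K, ∑ i ∈ Dbar k, hhat i = w (Dbar k))
    (hhat_core : ∀ B : Finset D, w B ≤ ∑ i ∈ B, hhat i) :
    ∀ h : D → ℤ, (∀ B : Finset D, w B ≤ ∑ i ∈ B, h i) →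
      ∀ m : ℕ, m ≤ Fintype.card D →
        topSumListZ (Finset.univ.toList.map hhat) m ≤
          topSumListZ (Finset.univ.toList.map h) m := by
  classical
  intro h hfeas m hmcard
  rcases Nat.eq_zero_or_pos m with rfl | hm1
  · simp [topSumListZ]
  -- monotonicity of c
  have cmono : ∀ a b : ℕ, a ≤ b → b < K → c b ≤ c a := by
    have aux : ∀ d a, a + d < K → c (a + d) ≤ c a := by
      intro d
      induction d with
      | zero => intro a _; simp
      | succ d ih =>
        intro a hK
        have h1 := hmono (a + d) (by omega)
        have h2 := ih a (by omega)
        have he : a + (d + 1) = (a + d) + 1 := by omega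
        rw [he]
        linarith
    intro a b hab hbK
    have := aux (b - a) a (by omega)
    rwa [show a + (b - a) = b by omega] at this
  -- block membership facts
  have hmem : ∀ i : D, ∃ j, j < K ∧ i ∈ Dk j := by
    intro i
    have h1 : i ∈ Dbar K := by rw [hcover]; exact Finset.mem_univ i
    rw [hDbar] at h1
    simpa using Finset.mem_biUnion.mp h1
  have hmembar : ∀ (t : ℕ) (i : D), i ∈ Dbar t ↔ ∃ j, j < t ∧ i ∈ Dk j := by
    intro t i
    rw [hDbar]
    simp [Finset.mem_biUnion]
  have hbounds : ∀ j, j < K → ∀ i ∈ Dk j, (⌊c j⌋ ≤ hhat i ∧ hhat i ≤ ⌈c j⌉) := by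
    intro j hj i hi
    have hc : hstar i = c j := hconst j hj i hi
    rcases hround i with h' | h' <;> rw [h', hc]
    · exact ⟨le_refl _, Int.floor_le_ceil _⟩
    · exact ⟨Int.floor_le_ceil _, le_refl _⟩
  -- key: level-set lemma
  have key : ∀ θ : ℤ, ∑ i ∈ Finset.univ.filter (fun i => θ ≤ hhat i), hhat i ≤
      topSumListZ (Finset.univ.toList.map h)
        (Finset.univ.filter (fun i => θ ≤ hhat i)).card := by
    intro θ
    have hexq : ∃ n, K ≤ n ∨ c n < (θ : ℝ) := ⟨K, Or.inl le_rfl⟩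
    have hexs : ∃ n, K ≤ n ∨ c n ≤ (θ : ℝ) - 1 := ⟨K, Or.inl le_rfl⟩
    set q := Nat.find hexq with hqdef
    set s := Nat.find hexs with hsdef
    have hqK : q ≤ K := Nat.find_le (Or.inl le_rfl)
    have hsK : s ≤ K := Nat.find_le (Or.inl le_rfl)
    have hqs : q ≤ s := by
      apply Nat.find_mono
      intro n hn
      rcases hn with hn | hn
      · exact Or.inl hn
      · exact Or.inr (by linarith)
    have hqlt : ∀ j, j < q → j < K ∧ (θ : ℝ) ≤ c j := by
      intro j hj
      have := Nat.find_min hexq hj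
      push_neg at this
      exact ⟨by omega, this.2⟩
    have hslt : ∀ j, j < s → j < K ∧ (θ : ℝ) - 1 < c j := by
      intro j hj
      have := Nat.find_min hexs hj
      push_neg at this
      exact ⟨by omega, this.2⟩
    have hsub : Dbar q ⊆ Dbar s := by
      rw [hDbar, hDbar]
      exact Finset.biUnion_subset_biUnion_of_subset_left _
        (Finset.range_subset_range.mpr hqs)
    set W := Finset.univ.filter (fun i => θ ≤ hhat i) with hWdef
    have hAW : Dbar q ⊆ W := by
      intro i hi
      rcases (hmembar q i).mp hi with ⟨j, hjq, hij⟩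
      obtain ⟨hjK, hcj⟩ := hqlt j hjq
      have hfl : θ ≤ ⌊c j⌋ := Int.le_floor.mpr hcj
      have hb := (hbounds j hjK i hij).1
      exact Finset.mem_filter.mpr ⟨Finset.mem_univ _, by omega⟩
    have hWS : W ⊆ Dbar s := by
      intro i hi
      by_contra hns
      obtain ⟨j, hjK, hij⟩ := hmem i
      have hjs : s ≤ j := by
        by_contra hlt
        push_neg at hlt
        exact hns ((hmembar s i).mpr ⟨j, hlt, hij⟩)
      have hsK' : s < K := lt_of_le_of_lt hjs hjK
      have hcs : c s ≤ (θ : ℝ) - 1 := (Nat.find_spec hexs).resolve_left (by omega)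
      have hcj : c j ≤ (θ : ℝ) - 1 := le_trans (cmono s j hjs hjK) hcs
      have hcl : ⌈c j⌉ ≤ θ - 1 := Int.ceil_le.mpr (by push_cast; linarith)
      have hb := (hbounds j hjK i hij).2
      have hWm := (Finset.mem_filter.mp hi).2
      omega
    have hdich : ∀ i ∈ Dbar s \ Dbar q, hhat i = θ - 1 ∨ hhat i = θ := by
      intro i hi
      rcases Finset.mem_sdiff.mp hi with ⟨his, hiq⟩
      rcases (hmembar s i).mp his with ⟨j, hjs, hij⟩
      have hjq : q ≤ j := by
        by_contra hlt
        push_neg at hlt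
        exact hiq ((hmembar q i).mpr ⟨j, hlt, hij⟩)
      have hjK : j < K := lt_of_lt_of_le hjs hsK
      have h1 : (θ : ℝ) - 1 < c j := (hslt j hjs).2
      have h2 : c j < (θ : ℝ) := by
        have hqK' : q < K := lt_of_le_of_lt hjq hjK
        have hcq : c q < (θ : ℝ) := (Nat.find_spec hexq).resolve_left (by omega)
        exact lt_of_le_of_lt (cmono q j hjq hjK) hcq
      have hfl : ⌊c j⌋ = θ - 1 := by
        rw [Int.floor_eq_iff]
        constructor <;> push_cast <;> linarith
      have hcl : ⌈c j⌉ = θ := by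
        rw [Int.ceil_eq_iff]
        constructor <;> push_cast <;> linarith
      have hb := hbounds j hjK i hij
      omega
    have hAsum : ∑ i ∈ Dbar q, hhat i ≤ ∑ i ∈ Dbar q, h i := by
      rw [hhat_bind q hqK]; exact hfeas (Dbar q)
    have hSsum : ∑ i ∈ Dbar s, hhat i ≤ ∑ i ∈ Dbar s, h i := by
      rw [hhat_bind s hsK]; exact hfeas (Dbar s)
    obtain ⟨B, hBcard, hBsum⟩ :=
      lsl hhat h θ (Dbar q) (Dbar s) hsub W hWdef hAW hWS hdich hAsum hSsum
    calc ∑ i ∈ W, hhat i ≤ ∑ i ∈ B, h i := hBsum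
    _ ≤ topSumListZ (Finset.univ.toList.map h) B.card := sum_le_topSum h B
    _ = topSumListZ (Finset.univ.toList.map h) W.card := by rw [hBcard]
  -- set up sorted lists
  simp only [topSumListZ]
  set sh := ((Finset.univ.toList.map hhat).insertionSort (· ≥ ·)) with hshdef
  set sg := ((Finset.univ.toList.map h).insertionSort (· ≥ ·)) with hsgdef
  have hsh_sorted : sh.Pairwise (· ≥ ·) := List.pairwise_insertionSort _ _
  have hsg_sorted : sg.Pairwise (· ≥ ·) := List.pairwise_insertionSort _ _
  have hsh_perm : sh.Perm (Finset.univ.toList.map hhat) := List.perm_insertionSort _ _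
  have hsg_perm : sg.Perm (Finset.univ.toList.map h) := List.perm_insertionSort _ _
  have hlenh : sh.length = Fintype.card D := by
    rw [hshdef, List.length_insertionSort, List.length_map, Finset.length_toList,
      Finset.card_univ]
  have hleng : sg.length = Fintype.card D := by
    rw [hsgdef, List.length_insertionSort, List.length_map, Finset.length_toList,
      Finset.card_univ]
  have hm1' : m - 1 < sh.length := by omega
  set θ := sh[m - 1] with hθdef
  obtain ⟨hu_le, hv_ge, hsum_le⟩ := sorted_take_facts sh m θ hm1 (by omega)
    (fun j hj hjm => by
      have := sorted_getElem_le sh hsh_sorted (i := j) (j := m - 1) (by omega) hm1'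
      rw [← hθdef] at this
      exact this)
    (fun j hj hjm => by
      have := sorted_getElem_le sh hsh_sorted (i := m - 1) (j := j) (by omega) hj
      rw [← hθdef] at this
      exact this)
  -- transfer to Finset language
  obtain ⟨hcntU, hsumU⟩ := transfer hhat (fun x => θ + 1 ≤ x)
  obtain ⟨hcntV, _⟩ := transfer hhat (fun x => θ ≤ x)
  set U := Finset.univ.filter (fun i => θ + 1 ≤ hhat i) with hUdef
  set V := Finset.univ.filter (fun i => θ ≤ hhat i) with hVdef
  have hcntU' : sh.countP (fun x => decide (θ + 1 ≤ x)) = U.card := by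
    rw [hsh_perm.countP_eq]; exact hcntU
  have hcntV' : sh.countP (fun x => decide (θ ≤ x)) = V.card := by
    rw [hsh_perm.countP_eq]; exact hcntV
  have hsumU' : (sh.filter (fun x => decide (θ + 1 ≤ x))).sum = ∑ i ∈ U, hhat i := by
    rw [(hsh_perm.filter _).sum_eq]; exact hsumU
  rw [hcntU'] at hu_le hsum_le
  rw [hcntV'] at hv_ge
  rw [hsumU'] at hsum_le
  -- bounds on u, v
  have huv : U.card ≤ m := hu_le
  have hvm : m ≤ V.card := hv_ge
  have hvcard : V.card ≤ Fintype.card D := by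
    calc V.card ≤ Finset.univ.card := Finset.card_le_card (Finset.filter_subset _ _)
    _ = Fintype.card D := Finset.card_univ
  have hUV : U ⊆ V := by
    intro i hi
    rcases Finset.mem_filter.mp hi with ⟨h1, h2⟩
    exact Finset.mem_filter.mpr ⟨h1, by omega⟩
  -- ∑ V hhat = ∑ U hhat + (v - u) θ
  have hVU_val : ∀ i ∈ V \ U, hhat i = θ := by
    intro i hi
    rcases Finset.mem_sdiff.mp hi with ⟨hiV, hiU⟩
    have h1 := (Finset.mem_filter.mp hiV).2
    have h2 : ¬ (θ + 1 ≤ hhat i) := fun hx =>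
      hiU (Finset.mem_filter.mpr ⟨Finset.mem_univ _, hx⟩)
    omega
  have hsumV : ∑ i ∈ V, hhat i
      = ∑ i ∈ U, hhat i + ((V.card : ℤ) - U.card) * θ := by
    rw [← Finset.sum_sdiff hUV, Finset.sum_congr rfl hVU_val, Finset.sum_const,
      nsmul_eq_mul, Finset.card_sdiff_of_subset hUV,
      Nat.cast_sub (Finset.card_le_card hUV)]
    ring
  -- apply key at θ+1 and θ
  have hkeyU := key (θ + 1)
  have hkeyV := key θ
  rw [← hUdef] at hkeyU
  rw [← hVdef] at hkeyV
  -- F(k) for the h-side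
  simp only [topSumListZ] at hkeyU hkeyV
  rw [← hsgdef] at hkeyU hkeyV
  -- case analysis
  have hmg : m ≤ sg.length := by omega
  have hm1g : m - 1 < sg.length := by omega
  set θh := sg[m - 1] with hθhdef
  by_cases hcase : θ ≤ θh
  · -- entries of sg at positions [U.card, m) are ≥ θ
    have hstep := take_sum_add_le sg θ (m - U.card) U.card (by omega)
      (fun j hj hja hjk => by
        have h1 := sorted_getElem_le sg hsg_sorted (i := j) (j := m - 1) (by omega) hm1g
        rw [← hθhdef] at h1
        omega)
    rw [show U.card + (m - U.card) = m by omega] at hstep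
    have hcast3 : ((m - U.card : ℕ) : ℤ) = (m : ℤ) - U.card := by
      rw [Nat.cast_sub huv]
    rw [hcast3] at hstep
    linarith
  · push_neg at hcase
    have hstep := take_sum_le_add sg θ (V.card - m) m (by omega)
      (fun j hj hja hjk => by
        have h1 := sorted_getElem_le sg hsg_sorted (i := m - 1) (j := j) (by omega) hj
        rw [← hθhdef] at h1
        omega)
    rw [show m + (V.card - m) = V.card by omega] at hstep
    have hcast4 : ((V.card - m : ℕ) : ℤ) = (V.card : ℤ) - m := by
      rw [Nat.cast_sub hvm]
    rw [hcast4] at hstep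
    have hub : ((m : ℤ) - U.card) * θ
        = ((V.card : ℤ) - U.card) * θ - ((V.card : ℤ) - m) * θ := by ring
    linarith
end

section
/- In a flow network with integer edge and node capacities, a single source, and sinks D, let v(B) denote the maximum total flow into the sinks in B for each B ⊆ D. Then v is submodular: v(B ∪ {x}) − v(B) ≤ v(A ∪ {x}) − v(A) whenever A ⊆ B ⊆ D and x ∉ B. -/
open Finset

/-- A single-source flow network with nonnegative integer capacities on edges
(`cap u v = 0` meaning no edge) and on sink nodes. -/
structure FlowNetwork (V : Type*) [Fintype V] [DecidableEq V] where
  source : V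
  sinks : Finset V
  source_not_sink : source ∉ sinks
  cap : V → V → ℕ
  sinkCap : V → ℕ

/-- Total flow into a node. -/
def inflow {V : Type*} [Fintype V] (f : V → V → ℝ) (v : V) : ℝ := ∑ u, f u v

/-- Total flow out of a node. -/
def outflow {V : Type*} [Fintype V] (f : V → V → ℝ) (v : V) : ℝ := ∑ u, f v u

/-- A feasible flow: nonnegative, respects edge capacities, conserves flow at
intermediate nodes, nothing leaves a sink, and sink-node capacities hold. -/
def IsFlow {V : Type*} [Fintype V] [DecidableEq V]
    (N : FlowNetwork V) (f : V → V → ℝ) : Prop :=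
  (∀ u v, 0 ≤ f u v) ∧
  (∀ u v, f u v ≤ (N.cap u v : ℝ)) ∧
  (∀ v, v ≠ N.source → v ∉ N.sinks → inflow f v = outflow f v) ∧
  (∀ d ∈ N.sinks, ∀ u, f d u = 0) ∧
  (∀ d ∈ N.sinks, inflow f d ≤ (N.sinkCap d : ℝ))

namespace SubAux

set_option linter.unusedSectionVars false

variable {V : Type*} [Fintype V] [DecidableEq V]

noncomputable def excess (f : V → V → ℝ) (v : V) : ℝ := inflow f v - outflow f v

noncomputable def cutCap (N : FlowNetwork V) (B S : Finset V) : ℝ :=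
  (∑ u ∈ S \ N.sinks, ∑ w ∈ Sᶜ, (N.cap u w : ℝ)) + ∑ d ∈ B ∩ S, (N.sinkCap d : ℝ)

def Res (N : FlowNetwork V) (g : V → V → ℝ) (u v : V) : Prop :=
  (u ∉ N.sinks ∧ g u v < N.cap u v) ∨ 0 < g v u

lemma outflow_sink {N : FlowNetwork V} {f : V → V → ℝ} (hf : IsFlow N f)
    {d : V} (hd : d ∈ N.sinks) : outflow f d = 0 := by
  unfold outflow
  exact Finset.sum_eq_zero fun u _ => hf.2.2.2.1 d hd u

lemma inflow_eq_excess {N : FlowNetwork V} {f : V → V → ℝ} (hf : IsFlow N f)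
    {d : V} (hd : d ∈ N.sinks) : inflow f d = excess f d := by
  unfold excess; rw [outflow_sink hf hd]; ring

lemma sum_excess (f : V → V → ℝ) (R : Finset V) :
    ∑ v ∈ R, excess f v =
      (∑ v ∈ R, ∑ u ∈ Rᶜ, f u v) - ∑ v ∈ R, ∑ u ∈ Rᶜ, f v u := by
  have h1 : ∀ v, inflow f v = (∑ u ∈ R, f u v) + ∑ u ∈ Rᶜ, f u v := by
    intro v; rw [Finset.sum_add_sum_compl]; rfl
  have h2 : ∀ v, outflow f v = (∑ u ∈ R, f v u) + ∑ u ∈ Rᶜ, f v u := by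
    intro v; rw [Finset.sum_add_sum_compl]; rfl
  have h3 : ∑ v ∈ R, ∑ u ∈ R, f u v = ∑ v ∈ R, ∑ u ∈ R, f v u :=
    Finset.sum_comm
  simp only [excess, h1, h2]
  rw [Finset.sum_sub_distrib, Finset.sum_add_distrib, Finset.sum_add_distrib, h3]
  ring

lemma inflow_nonneg {f : V → V → ℝ} (h : ∀ u v, 0 ≤ f u v) (v : V) :
    0 ≤ inflow f v := Finset.sum_nonneg fun u _ => h u v

/-- weak duality -/
lemma weak_duality (N : FlowNetwork V) {f : V → V → ℝ} (hf : IsFlow N f)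
    {B S : Finset V} (hB : B ⊆ N.sinks) (hS : N.source ∈ S) :
    ∑ d ∈ B, inflow f d ≤ cutCap N B S := by
  obtain ⟨hpos, hcap, hcons, hsink, hκ⟩ := hf
  have hsplit : ∑ d ∈ B, inflow f d
      = ∑ d ∈ B ∩ S, inflow f d + ∑ d ∈ B \ S, inflow f d := by
    rw [Finset.sum_inter_add_sum_sdiff]
  -- sum over complement of S of excess
  have hex : ∑ v ∈ Sᶜ, excess f v =
      (∑ v ∈ Sᶜ, ∑ u ∈ Sᶜᶜ, f u v) - ∑ v ∈ Sᶜ, ∑ u ∈ Sᶜᶜ, f v u :=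
    sum_excess f Sᶜ
  rw [compl_compl] at hex
  -- excess on complement equals sum of inflows of sinks outside S
  have hex2 : ∑ d ∈ N.sinks \ S, inflow f d = ∑ v ∈ Sᶜ, excess f v := by
    rw [show N.sinks \ S = Sᶜ ∩ N.sinks by
      ext a; simp [Finset.mem_sdiff, Finset.mem_compl, and_comm]]
    rw [← Finset.sum_inter_add_sum_sdiff Sᶜ N.sinks (excess f)] 
    have hz : ∑ v ∈ Sᶜ \ N.sinks, excess f v = 0 := by
      apply Finset.sum_eq_zero
      intro v hv
      rw [Finset.mem_sdiff, Finset.mem_compl] at hv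
      have hvs : v ≠ N.source := by rintro rfl; exact hv.1 hS
      have := hcons v hvs hv.2
      simp [excess, this]
    rw [hz, add_zero]
    apply Finset.sum_congr rfl
    intro d hd
    rw [Finset.mem_inter] at hd
    exact inflow_eq_excess ⟨hpos, hcap, hcons, hsink, hκ⟩ hd.2
  have h5 : ∑ d ∈ B \ S, inflow f d ≤ ∑ d ∈ N.sinks \ S, inflow f d := by
    apply Finset.sum_le_sum_of_subset_of_nonneg
    · exact Finset.sdiff_subset_sdiff hB (le_refl _)
    · intro i _ _; exact inflow_nonneg hpos i
  have h6 : ∑ v ∈ Sᶜ, excess f v ≤ ∑ u ∈ S \ N.sinks, ∑ w ∈ Sᶜ, (N.cap u w : ℝ) := by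
    rw [hex]
    have h7 : ∑ v ∈ Sᶜ, ∑ u ∈ S, f u v ≤ ∑ u ∈ S \ N.sinks, ∑ w ∈ Sᶜ, (N.cap u w : ℝ) := by
      rw [Finset.sum_comm]
      rw [← Finset.sum_inter_add_sum_sdiff S N.sinks (fun u => ∑ v ∈ Sᶜ, f u v)]
      have hz2 : ∑ u ∈ S ∩ N.sinks, ∑ v ∈ Sᶜ, f u v = 0 := by
        apply Finset.sum_eq_zero; intro u hu
        apply Finset.sum_eq_zero; intro w _
        exact hsink u (Finset.mem_inter.1 hu).2 w
      rw [hz2, zero_add]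
      exact Finset.sum_le_sum fun u _ => Finset.sum_le_sum fun w _ => hcap u w
    have h8 : 0 ≤ ∑ v ∈ Sᶜ, ∑ u ∈ S, f v u :=
      Finset.sum_nonneg fun v _ => Finset.sum_nonneg fun u _ => hpos v u
    linarith
  have h9 : ∑ d ∈ B ∩ S, inflow f d ≤ ∑ d ∈ B ∩ S, (N.sinkCap d : ℝ) :=
    Finset.sum_le_sum fun d hd => hκ d (hB (Finset.mem_inter.1 hd).1)
  unfold cutCap
  rw [hsplit]
  have h10 := hex2 ▸ h5
  linarith

lemma sum_ite_pair (b c : V) (δ : ℝ) (v : V) :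
    ∑ u : V, (if u = b ∧ v = c then δ else 0) = if v = c then δ else 0 := by
  by_cases h : v = c
  · simp [h]
  · simp [h]

lemma augment (N : FlowNetwork V) {g : V → V → ℝ} (hg : IsFlow N g) {a w : V}
    (h : Relation.ReflTransGen (Res N g) a w) :
    ∃ ε : ℝ, 0 < ε ∧ ∃ C : ℝ, 0 ≤ C ∧ ∀ δ : ℝ, 0 < δ → δ ≤ ε → ∃ g' : V → V → ℝ,
      (∀ u v, 0 ≤ g' u v) ∧ (∀ u v, g' u v ≤ (N.cap u v : ℝ)) ∧
      (∀ u v, |g' u v - g u v| ≤ C * δ) ∧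
      (∀ d ∈ N.sinks, ∀ u, g' d u = 0) ∧
      (∀ v, excess g' v = excess g v +
        δ * ((if v = w then 1 else 0) - (if v = a then 1 else 0))) := by
  induction h with
  | refl =>
    refine ⟨1, one_pos, 1, zero_le_one, fun δ hδ hδ1 => ⟨g, hg.1, hg.2.1, ?_, hg.2.2.2.1, ?_⟩⟩
    · intro u v; simp; linarith
    · intro v; simp
  | @tail b c hab hbc ih =>
    obtain ⟨ε, hε, C, hC, hIH⟩ := ih
    rcases hbc with ⟨hbs, hlt⟩ | hpos
    · -- forward edge b → c
      have hs0 : (0:ℝ) < (N.cap b c : ℝ) - g b c := by linarith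
      set s : ℝ := (N.cap b c : ℝ) - g b c with hs
      refine ⟨min ε (s / (C + 1)), lt_min hε (by positivity), C + 1, by linarith, ?_⟩
      intro δ hδ hδ1
      obtain ⟨g', h1, h2, h3, h4, h5⟩ := hIH δ hδ (hδ1.trans (min_le_left _ _))
      have hδs : (C + 1) * δ ≤ s := by
        have h9 := hδ1.trans (min_le_right _ _)
        rw [le_div_iff₀ (by positivity)] at h9
        linarith
      refine ⟨fun u v => g' u v + if u = b ∧ v = c then δ else 0, ?_, ?_, ?_, ?_, ?_⟩
      · intro u v; dsimp only
        have := h1 u v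
        by_cases huv : u = b ∧ v = c
        · rw [if_pos huv]; linarith
        · rw [if_neg huv]; linarith
      · intro u v; dsimp only
        by_cases huv : u = b ∧ v = c
        · obtain ⟨rfl, rfl⟩ := huv
          have h9 := (abs_le.1 (h3 u v)).2
          rw [if_pos ⟨rfl, rfl⟩]
          have : C * δ + δ ≤ s := by nlinarith
          simp only [hs] at this
          linarith
        · rw [if_neg huv, add_zero]; exact h2 u v
      · intro u v; dsimp only
        have h9 := abs_le.1 (h3 u v)
        rw [abs_le]
        by_cases huv : u = b ∧ v = c
        · rw [if_pos huv]
          constructor <;> nlinarith [hδ.le]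
        · rw [if_neg huv]
          constructor <;> nlinarith [hδ.le]
      · intro d hd u; dsimp only
        have hdb : ¬(d = b ∧ u = c) := fun hh => hbs (hh.1 ▸ hd)
        rw [if_neg hdb, add_zero]; exact h4 d hd u
      · intro v
        have hi : inflow (fun u v => g' u v + if u = b ∧ v = c then δ else 0) v
            = inflow g' v + if v = c then δ else 0 := by
          unfold inflow
          rw [Finset.sum_add_distrib, sum_ite_pair]
        have ho : outflow (fun u v => g' u v + if u = b ∧ v = c then δ else 0) v
            = outflow g' v + if v = b then δ else 0 := by
          unfold outflow
          rw [Finset.sum_add_distrib]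
          congr 1
          by_cases hv : v = b
          · subst hv; simp
          · simp [hv]
        have he : excess (fun u v => g' u v + if u = b ∧ v = c then δ else 0) v
            = excess g' v + ((if v = c then δ else 0) - (if v = b then δ else 0)) := by
          simp only [excess, hi, ho]; ring
        rw [he, h5 v]
        split_ifs <;> ring
    · -- backward edge: reduce flow on (c, b)
      have hs0 : (0:ℝ) < g c b := hpos
      set s : ℝ := g c b with hs
      have hcs : c ∉ N.sinks := by
        intro hcsink
        have h9 := hg.2.2.2.1 c hcsink b
        rw [hs, h9] at hs0; exact lt_irrefl 0 hs0
      refine ⟨min ε (s / (C + 1)), lt_min hε (by positivity), C + 1, by linarith, ?_⟩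
      intro δ hδ hδ1
      obtain ⟨g', h1, h2, h3, h4, h5⟩ := hIH δ hδ (hδ1.trans (min_le_left _ _))
      have hδs : (C + 1) * δ ≤ s := by
        have h9 := hδ1.trans (min_le_right _ _)
        rw [le_div_iff₀ (by positivity)] at h9
        linarith
      refine ⟨fun u v => g' u v - if u = c ∧ v = b then δ else 0, ?_, ?_, ?_, ?_, ?_⟩
      · intro u v; dsimp only
        by_cases huv : u = c ∧ v = b
        · obtain ⟨rfl, rfl⟩ := huv
          have h9 := (abs_le.1 (h3 u v)).1
          rw [if_pos ⟨rfl, rfl⟩]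
          simp only [hs] at hδs
          linarith
        · rw [if_neg huv, sub_zero]; exact h1 u v
      · intro u v; dsimp only
        have := h2 u v
        by_cases huv : u = c ∧ v = b
        · rw [if_pos huv]; linarith
        · rw [if_neg huv]; linarith
      · intro u v; dsimp only
        have h9 := abs_le.1 (h3 u v)
        rw [abs_le]
        by_cases huv : u = c ∧ v = b
        · rw [if_pos huv]
          constructor <;> nlinarith [hδ.le]
        · rw [if_neg huv]
          constructor <;> nlinarith [hδ.le]
      · intro d hd u; dsimp only
        have hdb : ¬(d = c ∧ u = b) := fun hh => hcs (hh.1 ▸ hd)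
        rw [if_neg hdb, sub_zero]; exact h4 d hd u
      · intro v
        have hi : inflow (fun u v => g' u v - if u = c ∧ v = b then δ else 0) v
            = inflow g' v - if v = b then δ else 0 := by
          unfold inflow
          rw [Finset.sum_sub_distrib, sum_ite_pair]
        have ho : outflow (fun u v => g' u v - if u = c ∧ v = b then δ else 0) v
            = outflow g' v - if v = c then δ else 0 := by
          unfold outflow
          rw [Finset.sum_sub_distrib]
          congr 1
          by_cases hv : v = c
          · subst hv; simp
          · simp [hv]
        have he : excess (fun u v => g' u v - if u = c ∧ v = b then δ else 0) v
            = excess g' v + ((if v = c then δ else 0) - (if v = b then δ else 0)) := by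
          simp only [excess, hi, ho]; ring
        rw [he, h5 v]
        split_ifs <;> ring



lemma continuous_app (u v : V) : Continuous (fun f : V → V → ℝ => f u v) :=
  (continuous_apply v).comp (continuous_apply u)

lemma continuous_inflow (v : V) : Continuous (fun f : V → V → ℝ => inflow f v) :=
  continuous_finset_sum _ fun u _ => continuous_app u v

lemma continuous_outflow (v : V) : Continuous (fun f : V → V → ℝ => outflow f v) :=
  continuous_finset_sum _ fun u _ => continuous_app v u

lemma continuous_value (s : Finset V) :
    Continuous (fun f : V → V → ℝ => ∑ d ∈ s, inflow f d) :=
  continuous_finset_sum _ fun d _ => continuous_inflow d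

lemma isClosed_isFlow (N : FlowNetwork V) : IsClosed {f : V → V → ℝ | IsFlow N f} := by
  have h1 : IsClosed {f : V → V → ℝ | ∀ u v, 0 ≤ f u v} := by
    rw [Set.setOf_forall]
    refine isClosed_iInter fun u => ?_
    rw [Set.setOf_forall]
    exact isClosed_iInter fun v => isClosed_le continuous_const (continuous_app u v)
  have h2 : IsClosed {f : V → V → ℝ | ∀ u v, f u v ≤ (N.cap u v : ℝ)} := by
    rw [Set.setOf_forall]
    refine isClosed_iInter fun u => ?_
    rw [Set.setOf_forall]
    exact isClosed_iInter fun v => isClosed_le (continuous_app u v) continuous_const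
  have h3 : IsClosed {f : V → V → ℝ |
      ∀ v, v ≠ N.source → v ∉ N.sinks → inflow f v = outflow f v} := by
    rw [Set.setOf_forall]
    refine isClosed_iInter fun v => ?_
    by_cases hv : v ≠ N.source ∧ v ∉ N.sinks
    · have : {f : V → V → ℝ | v ≠ N.source → v ∉ N.sinks → inflow f v = outflow f v}
          = {f : V → V → ℝ | inflow f v = outflow f v} := by
        ext f; simp [hv.1, hv.2]
      rw [this]
      exact isClosed_eq (continuous_inflow v) (continuous_outflow v)
    · have : {f : V → V → ℝ | v ≠ N.source → v ∉ N.sinks → inflow f v = outflow f v}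
          = Set.univ := by
        ext f
        simp only [Set.mem_setOf_eq, Set.mem_univ, iff_true]
        intro hs hk; exact absurd ⟨hs, hk⟩ hv
      rw [this]; exact isClosed_univ
  have h4 : IsClosed {f : V → V → ℝ | ∀ d ∈ N.sinks, ∀ u, f d u = 0} := by
    rw [Set.setOf_forall]
    refine isClosed_iInter fun d => ?_
    by_cases hd : d ∈ N.sinks
    · have : {f : V → V → ℝ | d ∈ N.sinks → ∀ u, f d u = 0}
          = {f : V → V → ℝ | ∀ u, f d u = 0} := by ext f; simp [hd]
      rw [this, Set.setOf_forall]
      exact isClosed_iInter fun u => isClosed_eq (continuous_app d u) continuous_const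
    · have : {f : V → V → ℝ | d ∈ N.sinks → ∀ u, f d u = 0} = Set.univ := by
        ext f; simp [hd]
      rw [this]; exact isClosed_univ
  have h5 : IsClosed {f : V → V → ℝ | ∀ d ∈ N.sinks, inflow f d ≤ (N.sinkCap d : ℝ)} := by
    rw [Set.setOf_forall]
    refine isClosed_iInter fun d => ?_
    by_cases hd : d ∈ N.sinks
    · have : {f : V → V → ℝ | d ∈ N.sinks → inflow f d ≤ (N.sinkCap d : ℝ)}
          = {f : V → V → ℝ | inflow f d ≤ (N.sinkCap d : ℝ)} := by ext f; simp [hd]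
      rw [this]
      exact isClosed_le (continuous_inflow d) continuous_const
    · have : {f : V → V → ℝ | d ∈ N.sinks → inflow f d ≤ (N.sinkCap d : ℝ)} = Set.univ := by
        ext f; simp [hd]
      rw [this]; exact isClosed_univ
  have : {f : V → V → ℝ | IsFlow N f} =
      {f : V → V → ℝ | ∀ u v, 0 ≤ f u v} ∩
      ({f : V → V → ℝ | ∀ u v, f u v ≤ (N.cap u v : ℝ)} ∩
      ({f : V → V → ℝ | ∀ v, v ≠ N.source → v ∉ N.sinks → inflow f v = outflow f v} ∩
      ({f : V → V → ℝ | ∀ d ∈ N.sinks, ∀ u, f d u = 0} ∩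
       {f : V → V → ℝ | ∀ d ∈ N.sinks, inflow f d ≤ (N.sinkCap d : ℝ)}))) := by
    ext f
    simp only [Set.mem_setOf_eq, Set.mem_inter_iff, IsFlow, and_assoc]
  rw [this]
  exact h1.inter (h2.inter (h3.inter (h4.inter h5)))

lemma isCompact_flows (N : FlowNetwork V) : IsCompact {f : V → V → ℝ | IsFlow N f} := by
  have hsub : {f : V → V → ℝ | IsFlow N f} ⊆
      Set.univ.pi (fun u => Set.univ.pi fun v => Set.Icc (0:ℝ) (N.cap u v)) := by
    intro f hf
    simp only [Set.mem_pi, Set.mem_univ, forall_true_left, Set.mem_Icc]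
    exact fun u v => ⟨hf.1 u v, hf.2.1 u v⟩
  exact IsCompact.of_isClosed_subset
    (isCompact_univ_pi fun u => isCompact_univ_pi fun v => isCompact_Icc)
    (isClosed_isFlow N) hsub

lemma exists_min_waste (N : FlowNetwork V) {B : Finset V} {vB : ℝ}
    (hex : ∃ f, IsFlow N f ∧ ∑ d ∈ B, inflow f d = vB) :
    ∃ g, IsFlow N g ∧ ∑ d ∈ B, inflow g d = vB ∧
      ∀ f, IsFlow N f → ∑ d ∈ B, inflow f d = vB →
        ∑ d ∈ N.sinks \ B, inflow g d ≤ ∑ d ∈ N.sinks \ B, inflow f d := by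
  set K : Set (V → V → ℝ) := {f | IsFlow N f ∧ ∑ d ∈ B, inflow f d = vB} with hK
  have hKne : K.Nonempty := by
    obtain ⟨f, hf, hval⟩ := hex; exact ⟨f, hf, hval⟩
  have hKc : IsCompact K := by
    apply IsCompact.of_isClosed_subset (isCompact_flows N)
    · exact (isClosed_isFlow N).inter
        (isClosed_eq (continuous_value B) continuous_const)
    · intro f hf; exact hf.1
  obtain ⟨g, hgK, hmin⟩ := hKc.exists_isMinOn hKne
    ((continuous_value (N.sinks \ B)).continuousOn)
  exact ⟨g, hgK.1, hgK.2, fun f hf hvf => hmin (Set.mem_setOf_eq ▸ ⟨hf, hvf⟩)⟩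


lemma inflow_eq_excess' {f : V → V → ℝ} {d : V} (h : ∀ u, f d u = 0) :
    inflow f d = excess f d := by
  have : outflow f d = 0 := Finset.sum_eq_zero fun u _ => h u
  unfold excess; rw [this]; ring

lemma augment_feasible (N : FlowNetwork V) {g : V → V → ℝ} (hg : IsFlow N g) {a w : V}
    (hpath : Relation.ReflTransGen (Res N g) a w) (haw : a ≠ w)
    (ha : a ∈ N.sinks ∨ a = N.source) (hw : w ∈ N.sinks ∨ w = N.source)
    (hslack : w ∈ N.sinks → inflow g w < (N.sinkCap w : ℝ)) :
    ∃ δ : ℝ, 0 < δ ∧ ∃ g'' : V → V → ℝ, IsFlow N g'' ∧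
      ∀ T : Finset V, T ⊆ N.sinks →
        ∑ d ∈ T, inflow g'' d = ∑ d ∈ T, inflow g d +
          δ * ((if w ∈ T then 1 else 0) - (if a ∈ T then 1 else 0)) := by
  classical
  obtain ⟨ε, hε, C, hC, H⟩ := augment N hg hpath
  set δ : ℝ := min ε (if w ∈ N.sinks then (N.sinkCap w : ℝ) - inflow g w else ε) with hδdef
  have hδ0 : 0 < δ := by
    apply lt_min hε
    by_cases hws : w ∈ N.sinks
    · rw [if_pos hws]; linarith [hslack hws]
    · rw [if_neg hws]; exact hε
  obtain ⟨g'', h1, h2, h3, h4, h5⟩ := H δ hδ0 (min_le_left _ _)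
  have hexc : ∀ v, excess g'' v = excess g v +
      δ * ((if v = w then 1 else 0) - (if v = a then 1 else 0)) := h5
  refine ⟨δ, hδ0, g'', ⟨h1, h2, ?_, h4, ?_⟩, ?_⟩
  · -- conservation
    intro v hvs hvk
    have hva : v ≠ a := by
      rcases ha with h | h
      · exact fun he => hvk (he ▸ h)
      · exact fun he => hvs (he ▸ h)
    have hvw : v ≠ w := by
      rcases hw with h | h
      · exact fun he => hvk (he ▸ h)
      · exact fun he => hvs (he ▸ h)
    have h6 := hexc v
    rw [if_neg hvw, if_neg hva] at h6
    have h7 := hg.2.2.1 v hvs hvk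
    have h8 : excess g v = 0 := by unfold excess; rw [h7]; ring
    have : excess g'' v = 0 := by rw [h6, h8]; ring
    unfold excess at this; linarith
  · -- sink capacities
    intro e he
    have hie : inflow g'' e = excess g'' e := inflow_eq_excess' (h4 e he)
    rw [hie, hexc e, ← inflow_eq_excess hg he]
    by_cases hew : e = w
    · subst hew
      have hae : ¬(e = a) := fun hh => haw hh.symm
      rw [if_pos rfl, if_neg hae]
      have hδle : δ ≤ (N.sinkCap e : ℝ) - inflow g e := by
        rw [hδdef, if_pos he]
        exact min_le_right _ _
      linarith
    · rw [if_neg hew]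
      have hcap := hg.2.2.2.2 e he
      by_cases hea : e = a
      · rw [if_pos hea]; nlinarith
      · rw [if_neg hea]; simpa using hcap
  · -- sums over subsets of sinks
    intro T hT
    have t1 : ∀ d ∈ T, inflow g'' d = inflow g d +
        δ * ((if d = w then 1 else 0) - (if d = a then 1 else 0)) := by
      intro d hd
      rw [inflow_eq_excess' (h4 d (hT hd)), hexc d, ← inflow_eq_excess hg (hT hd)]
    rw [Finset.sum_congr rfl t1, Finset.sum_add_distrib, ← Finset.mul_sum,
      Finset.sum_sub_distrib, Finset.sum_ite_eq' T w (fun _ => (1:ℝ)),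
      Finset.sum_ite_eq' T a (fun _ => (1:ℝ))]

lemma strong_duality (N : FlowNetwork V) {B : Finset V} (hB : B ⊆ N.sinks) {vB : ℝ}
    (hex : ∃ f, IsFlow N f ∧ ∑ d ∈ B, inflow f d = vB)
    (hub : ∀ f, IsFlow N f → ∑ d ∈ B, inflow f d ≤ vB) :
    ∃ S : Finset V, N.source ∈ S ∧ vB = cutCap N B S := by
  classical
  obtain ⟨g, hg, hgval, hgmin⟩ := exists_min_waste N hex
  have hsrcB : N.source ∉ B := fun h => N.source_not_sink (hB h)
  -- Step A : no waste
  have hnowaste : ∀ a ∈ N.sinks, a ∉ B → inflow g a = 0 := by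
    intro a ha haB
    by_contra hne
    have hpos : 0 < inflow g a := lt_of_le_of_ne (inflow_nonneg hg.1 a) (Ne.symm hne)
    set R : Finset V := Finset.univ.filter
      (fun u => Relation.ReflTransGen (Res N g) a u) with hR
    have haR : a ∈ R := Finset.mem_filter.2 ⟨Finset.mem_univ _, Relation.ReflTransGen.refl⟩
    have hclosed : ∀ v ∈ R, ∀ u, Res N g v u → u ∈ R := by
      intro v hv u hres
      exact Finset.mem_filter.2 ⟨Finset.mem_univ _,
        ((Finset.mem_filter.1 hv).2).tail hres⟩
    by_cases hsrc : N.source ∈ R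
    · -- reduce waste along a path to the source : contradiction with minimality
      have hpath := (Finset.mem_filter.1 hsrc).2
      have haw : a ≠ N.source := fun h => N.source_not_sink (h ▸ ha)
      obtain ⟨δ, hδ, g'', hg'', hsum⟩ := augment_feasible N hg hpath haw (Or.inl ha)
        (Or.inr rfl) (fun hws => absurd hws N.source_not_sink)
      have hvalB := hsum B hB
      rw [if_neg hsrcB, if_neg haB] at hvalB
      have hvalB' : ∑ d ∈ B, inflow g'' d = vB := by rw [hvalB, hgval]; ring
      have hwaste := hsum (N.sinks \ B) (Finset.sdiff_subset)
      have hsw : N.source ∉ N.sinks \ B := fun h =>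
        N.source_not_sink (Finset.mem_sdiff.1 h).1
      have haw2 : a ∈ N.sinks \ B := Finset.mem_sdiff.2 ⟨ha, haB⟩
      rw [if_neg hsw, if_pos haw2] at hwaste
      have := hgmin g'' hg'' hvalB'
      rw [hwaste] at this
      linarith
    · -- residual-closed region with positive excess : contradiction
      have hkey : ∀ v ∈ R, ∀ u ∈ Rᶜ, g u v = 0 := by
        intro v hv u hu
        have hnr : ¬ Res N g v u := fun h => (Finset.mem_compl.1 hu) (hclosed v hv u h)
        unfold Res at hnr
        push_neg at hnr
        exact le_antisymm hnr.2 (hg.1 u v)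
      have hse := sum_excess g R
      have hub2 : ∑ v ∈ R, excess g v ≤ 0 := by
        rw [hse]
        have t1 : ∑ v ∈ R, ∑ u ∈ Rᶜ, g u v = 0 :=
          Finset.sum_eq_zero fun v hv => Finset.sum_eq_zero fun u hu => hkey v hv u hu
        have t2 : (0:ℝ) ≤ ∑ v ∈ R, ∑ u ∈ Rᶜ, g v u :=
          Finset.sum_nonneg fun v _ => Finset.sum_nonneg fun u _ => hg.1 v u
        linarith
      have hlb : 0 < ∑ v ∈ R, excess g v := by
        apply Finset.sum_pos'
        · intro v hv
          by_cases hvs : v ∈ N.sinks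
          · rw [← inflow_eq_excess hg hvs]; exact inflow_nonneg hg.1 v
          · have hvsrc : v ≠ N.source := fun h => hsrc (h ▸ hv)
            have h7 := hg.2.2.1 v hvsrc hvs
            unfold excess; rw [h7]; simp
        · exact ⟨a, haR, by rw [← inflow_eq_excess hg ha]; exact hpos⟩
      linarith
  -- the reachable set from the source
  set S : Finset V := Finset.univ.filter
    (fun u => Relation.ReflTransGen (Res N g) N.source u) with hS
  have hsrcS : N.source ∈ S :=
    Finset.mem_filter.2 ⟨Finset.mem_univ _, Relation.ReflTransGen.refl⟩
  have hclosed : ∀ v ∈ S, ∀ u, Res N g v u → u ∈ S := by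
    intro v hv u hres
    exact Finset.mem_filter.2 ⟨Finset.mem_univ _, ((Finset.mem_filter.1 hv).2).tail hres⟩
  have hnores : ∀ v ∈ S, ∀ u ∈ Sᶜ, ¬ Res N g v u := by
    intro v hv u hu h
    exact (Finset.mem_compl.1 hu) (hclosed v hv u h)
  -- Step B : sinks of B inside S are saturated
  have hsat : ∀ d ∈ B, d ∈ S → inflow g d = (N.sinkCap d : ℝ) := by
    intro d hdB hdS
    by_contra hne
    have hlt : inflow g d < (N.sinkCap d : ℝ) :=
      lt_of_le_of_ne (hg.2.2.2.2 d (hB hdB)) hne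
    have hpath := (Finset.mem_filter.1 hdS).2
    have haw : N.source ≠ d := fun h => N.source_not_sink (h ▸ hB hdB)
    obtain ⟨δ, hδ, g'', hg'', hsum⟩ := augment_feasible N hg hpath haw (Or.inr rfl)
      (Or.inl (hB hdB)) (fun _ => hlt)
    have hvalB := hsum B hB
    rw [if_pos hdB, if_neg hsrcB] at hvalB
    have := hub g'' hg''
    rw [hvalB, hgval] at this
    linarith
  -- Step C : compute the value as the cut capacity
  have c1 : vB = ∑ d ∈ B ∩ S, inflow g d + ∑ d ∈ B \ S, inflow g d := by
    rw [← hgval, Finset.sum_inter_add_sum_sdiff]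
  have c2 : ∑ d ∈ B ∩ S, inflow g d = ∑ d ∈ B ∩ S, (N.sinkCap d : ℝ) :=
    Finset.sum_congr rfl fun d hd =>
      hsat d (Finset.mem_inter.1 hd).1 (Finset.mem_inter.1 hd).2
  have c3 : ∑ d ∈ B \ S, inflow g d = ∑ d ∈ N.sinks \ S, inflow g d := by
    apply Finset.sum_subset
    · exact Finset.sdiff_subset_sdiff hB (le_refl _)
    · intro d hd hdn
      rcases Finset.mem_sdiff.1 hd with ⟨hds, hdS⟩
      have hdB : d ∉ B := fun h => hdn (Finset.mem_sdiff.2 ⟨h, hdS⟩)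
      exact hnowaste d hds hdB
  have c4 : ∑ d ∈ N.sinks \ S, inflow g d = ∑ v ∈ Sᶜ, excess g v := by
    rw [show N.sinks \ S = Sᶜ ∩ N.sinks by
      ext y; simp [Finset.mem_sdiff, Finset.mem_compl, and_comm]]
    rw [← Finset.sum_inter_add_sum_sdiff Sᶜ N.sinks (excess g)]
    have hz : ∑ v ∈ Sᶜ \ N.sinks, excess g v = 0 := by
      apply Finset.sum_eq_zero
      intro y hy
      rcases Finset.mem_sdiff.1 hy with ⟨hy1, hy2⟩
      have hys : y ≠ N.source := fun h => (Finset.mem_compl.1 hy1) (h ▸ hsrcS)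
      have h7 := hg.2.2.1 y hys hy2
      unfold excess; rw [h7]; ring
    rw [hz, add_zero]
    exact Finset.sum_congr rfl fun d hd =>
      inflow_eq_excess hg (Finset.mem_inter.1 hd).2
  have c5 : ∑ v ∈ Sᶜ, excess g v = ∑ u ∈ S \ N.sinks, ∑ v ∈ Sᶜ, (N.cap u v : ℝ) := by
    have hse := sum_excess g Sᶜ
    rw [compl_compl] at hse
    have t2 : ∑ v ∈ Sᶜ, ∑ u ∈ S, g v u = 0 := by
      apply Finset.sum_eq_zero; intro y hy
      apply Finset.sum_eq_zero; intro u hu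
      have hnr := hnores u hu y (Finset.mem_compl.2 (Finset.mem_compl.1 hy))
      unfold Res at hnr; push_neg at hnr
      exact le_antisymm hnr.2 (hg.1 y u)
    have t1 : ∑ v ∈ Sᶜ, ∑ u ∈ S, g u v
        = ∑ u ∈ S \ N.sinks, ∑ v ∈ Sᶜ, (N.cap u v : ℝ) := by
      rw [Finset.sum_comm]
      rw [← Finset.sum_inter_add_sum_sdiff S N.sinks (fun u => ∑ v ∈ Sᶜ, g u v)]
      have z1 : ∑ u ∈ S ∩ N.sinks, ∑ v ∈ Sᶜ, g u v = 0 := by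
        apply Finset.sum_eq_zero; intro u hu
        apply Finset.sum_eq_zero; intro y _
        exact hg.2.2.2.1 u (Finset.mem_inter.1 hu).2 y
      rw [z1, zero_add]
      apply Finset.sum_congr rfl
      intro u hu
      apply Finset.sum_congr rfl
      intro y hy
      rcases Finset.mem_sdiff.1 hu with ⟨huS, huk⟩
      have hnr := hnores u huS y hy
      unfold Res at hnr; push_neg at hnr
      exact le_antisymm (hg.2.1 u y) (hnr.1 huk)
    rw [hse, t1, t2, sub_zero]
  refine ⟨S, hsrcS, ?_⟩
  unfold cutCap
  rw [c1, c2, c3, c4, c5]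
  ring


lemma sum_indicator (s : Finset V) (F : V → ℝ) :
    ∑ u ∈ s, F u = ∑ u, if u ∈ s then F u else 0 := by
  rw [Finset.sum_ite_mem, Finset.univ_inter]

lemma cutCap_submodular (N : FlowNetwork V) {A B : Finset V} {x : V} (hAB : A ⊆ B)
    (hxB : x ∉ B) (S T : Finset V) :
    cutCap N (insert x B) (S ∩ T) + cutCap N A (S ∪ T) ≤
      cutCap N (insert x A) S + cutCap N B T := by
  have hxA : x ∉ A := fun h => hxB (hAB h)
  unfold cutCap
  have hedge : (∑ u ∈ (S ∩ T) \ N.sinks, ∑ w ∈ (S ∩ T)ᶜ, (N.cap u w : ℝ)) +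
      (∑ u ∈ (S ∪ T) \ N.sinks, ∑ w ∈ (S ∪ T)ᶜ, (N.cap u w : ℝ)) ≤
      (∑ u ∈ S \ N.sinks, ∑ w ∈ Sᶜ, (N.cap u w : ℝ)) +
      (∑ u ∈ T \ N.sinks, ∑ w ∈ Tᶜ, (N.cap u w : ℝ)) := by
    have expand : ∀ X : Finset V, (∑ u ∈ X \ N.sinks, ∑ w ∈ Xᶜ, (N.cap u w : ℝ))
        = ∑ u, ∑ w, (if u ∈ X \ N.sinks then (if w ∈ Xᶜ then (N.cap u w : ℝ) else 0) else 0) := by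
      intro X
      rw [sum_indicator (X \ N.sinks) (fun u => ∑ w ∈ Xᶜ, (N.cap u w : ℝ))]
      apply Finset.sum_congr rfl
      intro u _
      by_cases hu : u ∈ X \ N.sinks
      · rw [if_pos hu, sum_indicator Xᶜ]
        exact Finset.sum_congr rfl fun w _ => by rw [if_pos hu]
      · rw [if_neg hu]
        exact (Finset.sum_eq_zero fun w _ => by rw [if_neg hu]).symm
    rw [expand, expand, expand, expand, ← Finset.sum_add_distrib, ← Finset.sum_add_distrib]
    apply Finset.sum_le_sum
    intro u _
    rw [← Finset.sum_add_distrib, ← Finset.sum_add_distrib]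
    apply Finset.sum_le_sum
    intro w _
    have hc : (0:ℝ) ≤ (N.cap u w : ℝ) := Nat.cast_nonneg _
    by_cases h1 : u ∈ S <;> by_cases h2 : u ∈ T <;> by_cases h3 : w ∈ S <;>
      by_cases h4 : w ∈ T <;> by_cases h5 : u ∈ N.sinks <;>
      simp [h1, h2, h3, h4, h5, Finset.mem_sdiff, Finset.mem_compl,
        Finset.mem_inter, Finset.mem_union] <;> linarith
  have hsink : (∑ d ∈ insert x B ∩ (S ∩ T), (N.sinkCap d : ℝ)) +
      (∑ d ∈ A ∩ (S ∪ T), (N.sinkCap d : ℝ)) ≤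
      (∑ d ∈ insert x A ∩ S, (N.sinkCap d : ℝ)) +
      (∑ d ∈ B ∩ T, (N.sinkCap d : ℝ)) := by
    have expand : ∀ P X : Finset V, (∑ d ∈ P ∩ X, (N.sinkCap d : ℝ))
        = ∑ d, (if d ∈ P ∩ X then (N.sinkCap d : ℝ) else 0) := fun P X =>
      sum_indicator (P ∩ X) _
    rw [expand, expand, expand, expand, ← Finset.sum_add_distrib, ← Finset.sum_add_distrib]
    apply Finset.sum_le_sum
    intro d _
    have hκ : (0:ℝ) ≤ (N.sinkCap d : ℝ) := Nat.cast_nonneg _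
    by_cases hdx : d = x
    · subst hdx
      by_cases h3 : d ∈ S <;> by_cases h4 : d ∈ T <;>
        simp [h3, h4, hxA, hxB, Finset.mem_inter, Finset.mem_union,
          Finset.mem_insert] <;> linarith
    · by_cases h1 : d ∈ A
      · have h2 : d ∈ B := hAB h1
        by_cases h3 : d ∈ S <;> by_cases h4 : d ∈ T <;>
          simp [hdx, h1, h2, h3, h4, Finset.mem_inter, Finset.mem_union,
            Finset.mem_insert] <;> linarith
      · by_cases h2 : d ∈ B <;> by_cases h3 : d ∈ S <;> by_cases h4 : d ∈ T <;>
          simp [hdx, h1, h2, h3, h4, Finset.mem_inter, Finset.mem_union,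
            Finset.mem_insert] <;> linarith
  linarith

end SubAux

/-- If `v B` is the maximum total flow into the sinks in `B` for every `B ⊆ D`,
then `v` is submodular. -/


theorem maxflow_submodular
    {V : Type*} [Fintype V] [DecidableEq V] (N : FlowNetwork V)
    (v : Finset V → ℝ)
    (hv : ∀ B ⊆ N.sinks,
      (∃ f, IsFlow N f ∧ ∑ d ∈ B, inflow f d = v B) ∧
      (∀ f, IsFlow N f → ∑ d ∈ B, inflow f d ≤ v B)) :
    ∀ (A B : Finset V) (x : V), A ⊆ B → B ⊆ N.sinks → x ∈ N.sinks → x ∉ B →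
      v (insert x B) - v B ≤ v (insert x A) - v A := by
  intro A B x hAB hBs hxs hxB
  have hAs : A ⊆ N.sinks := hAB.trans hBs
  have hiB : insert x B ⊆ N.sinks := Finset.insert_subset hxs hBs
  have hiA : insert x A ⊆ N.sinks := Finset.insert_subset hxs hAs
  -- min cuts for `insert x A` and for `B`
  obtain ⟨S, hSsrc, hSeq⟩ :=
    SubAux.strong_duality N hiA (hv (insert x A) hiA).1 (hv (insert x A) hiA).2
  obtain ⟨T, hTsrc, hTeq⟩ := SubAux.strong_duality N hBs (hv B hBs).1 (hv B hBs).2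
  -- weak duality for `insert x B` and `A`
  obtain ⟨f1, hf1, hval1⟩ := (hv (insert x B) hiB).1
  obtain ⟨f2, hf2, hval2⟩ := (hv A hAs).1
  have w1 : v (insert x B) ≤ SubAux.cutCap N (insert x B) (S ∩ T) := by
    rw [← hval1]
    exact SubAux.weak_duality N hf1 hiB (Finset.mem_inter.2 ⟨hSsrc, hTsrc⟩)
  have w2 : v A ≤ SubAux.cutCap N A (S ∪ T) := by
    rw [← hval2]
    exact SubAux.weak_duality N hf2 hAs (Finset.mem_union_left _ hSsrc)
  have hsub := SubAux.cutCap_submodular N hAB hxB S T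
  linarith
end

section
/- In a flow network with sinks D, integer capacities β_k on sink nodes, and B-maximum flow value v(B) for each B ⊆ D, define w(B) = β(B) − v(B) where β(B) = Σ_{k∈B} β_k. Then w is supermodular and integer-valued. -/
open Finset

set_option linter.unusedSectionVars false
set_option linter.unnecessarySeqFocus false
set_option linter.unnecessarySimpa false
set_option linter.unusedTactic false
set_option linter.unreachableTactic false

namespace DeficitAux
open scoped Classical

variable {V : Type*} [Fintype V] [DecidableEq V]

/-- effective capacity: edges out of sinks are useless -/
def cap' (N : FlowNetwork V) (u v : V) : ℕ := if u ∈ N.sinks then 0 else N.cap u v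

/-- residual edge -/
def Res (N : FlowNetwork V) (f : V → V → ℝ) (u v : V) : Prop :=
  (u ∉ N.sinks ∧ f u v < (N.cap u v : ℝ)) ∨ 0 < f v u

/-- cut value -/
def cutVal (N : FlowNetwork V) (B S : Finset V) : ℕ :=
  (∑ u ∈ S, ∑ x ∈ Sᶜ, cap' N u x) + ∑ d ∈ B ∩ S, N.sinkCap d

lemma sum_div_compl (f : V → V → ℝ) (S : Finset V) :
    ∑ x ∈ Sᶜ, (inflow f x - outflow f x)
      = (∑ u ∈ S, ∑ x ∈ Sᶜ, f u x) - (∑ u ∈ Sᶜ, ∑ x ∈ S, f u x) := by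
  have hin : ∀ x, inflow f x = ∑ u ∈ S, f u x + ∑ u ∈ Sᶜ, f u x := fun x =>
    (Finset.sum_add_sum_compl S fun u => f u x).symm
  have hout : ∀ x, outflow f x = ∑ u ∈ S, f x u + ∑ u ∈ Sᶜ, f x u := fun x =>
    (Finset.sum_add_sum_compl S fun u => f x u).symm
  simp only [hin, hout, Finset.sum_sub_distrib, Finset.sum_add_distrib]
  rw [Finset.sum_comm (s := Sᶜ) (t := S) (f := fun x u => f u x),
      Finset.sum_comm (s := Sᶜ) (t := Sᶜ) (f := fun x u => f u x)]
  ring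

noncomputable def egval (f : V → V → ℝ) (e : V × V) (u v : V) : ℝ :=
  if 0 < f e.2 e.1 then (if u = e.2 ∧ v = e.1 then -1 else 0)
  else (if u = e.1 ∧ v = e.2 then 1 else 0)

noncomputable def gval (f : V → V → ℝ) (E : List (V × V)) (u v : V) : ℝ :=
  (E.map fun e => egval f e u v).sum

lemma gval_nil (f : V → V → ℝ) (u v : V) : gval f [] u v = 0 := by simp [gval]

lemma gval_cons (f : V → V → ℝ) (e : V × V) (E : List (V × V)) (u v : V) :
    gval f (e :: E) u v = egval f e u v + gval f E u v := by simp [gval]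

lemma abs_egval_le (f : V → V → ℝ) (e : V × V) (u v : V) : |egval f e u v| ≤ 1 := by
  unfold egval; split_ifs <;> norm_num

lemma abs_gval_le (f : V → V → ℝ) (E : List (V × V)) (u v : V) :
    |gval f E u v| ≤ (E.length : ℝ) := by
  induction E with
  | nil => simp [gval]
  | cons e E ih =>
    rw [gval_cons]
    calc |egval f e u v + gval f E u v| ≤ |egval f e u v| + |gval f E u v| := abs_add_le _ _
      _ ≤ 1 + E.length := add_le_add (abs_egval_le f e u v) ih
      _ = ((e :: E).length : ℝ) := by simp [List.length_cons]; ring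

lemma gval_pos (f : V → V → ℝ) (E : List (V × V)) (u v : V) (h : 0 < gval f E u v) :
    ∃ e ∈ E, e.1 = u ∧ e.2 = v ∧ ¬ 0 < f v u := by
  induction E with
  | nil => simp [gval_nil] at h
  | cons e E ih =>
    rw [gval_cons] at h
    by_cases h1 : 0 < egval f e u v
    · refine ⟨e, List.mem_cons_self, ?_⟩
      unfold egval at h1
      split_ifs at h1 with hd hm hm
      · norm_num at h1
      · norm_num at h1
      · exact ⟨hm.1.symm, hm.2.symm, by rw [hm.1, hm.2]; exact hd⟩
      · norm_num at h1
    · push_neg at h1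
      obtain ⟨e', he', h2⟩ := ih (by linarith)
      exact ⟨e', List.mem_cons_of_mem _ he', h2⟩

lemma gval_neg (f : V → V → ℝ) (E : List (V × V)) (u v : V) (h : gval f E u v < 0) :
    ∃ e ∈ E, e.1 = v ∧ e.2 = u ∧ 0 < f u v := by
  induction E with
  | nil => simp [gval_nil] at h
  | cons e E ih =>
    rw [gval_cons] at h
    by_cases h1 : egval f e u v < 0
    · refine ⟨e, List.mem_cons_self, ?_⟩
      unfold egval at h1
      split_ifs at h1 with hd hm hm
      · exact ⟨hm.2.symm, hm.1.symm, by rw [hm.1, hm.2]; exact hd⟩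
      · norm_num at h1
      · norm_num at h1
      · norm_num at h1
    · push_neg at h1
      obtain ⟨e', he', h2⟩ := ih (by linarith)
      exact ⟨e', List.mem_cons_of_mem _ he', h2⟩

lemma sum_ite_and_left (c : V) (P : Prop) [Decidable P] (x : ℝ) :
    (∑ u : V, if u = c ∧ P then x else 0) = if P then x else 0 := by
  by_cases hP : P <;> simp [hP]

lemma sum_ite_and_right (c : V) (P : Prop) [Decidable P] (x : ℝ) :
    (∑ u : V, if P ∧ u = c then x else 0) = if P then x else 0 := by
  by_cases hP : P <;> simp [hP]

lemma egdiv (f : V → V → ℝ) (e : V × V) (m : V) :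
    (∑ u, egval f e u m) - (∑ u, egval f e m u)
      = (if m = e.2 then (1 : ℝ) else 0) - (if m = e.1 then 1 else 0) := by
  obtain ⟨a, b⟩ := e
  by_cases hd : 0 < f b a <;>
    simp only [egval, hd, if_true, if_false] <;>
    rw [sum_ite_and_left, sum_ite_and_right] <;>
    split_ifs <;> ring

lemma gdiv (f : V → V → ℝ) (m : V) :
    ∀ (p : List V) (hp : p ≠ []),
      (∑ u, gval f (p.zip p.tail) u m) - (∑ u, gval f (p.zip p.tail) m u)
        = (if m = p.getLast hp then (1 : ℝ) else 0) - (if m = p.head hp then 1 else 0) := by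
  intro p
  induction p with
  | nil => intro hp; exact absurd rfl hp
  | cons z t ih =>
    intro hp
    cases t with
    | nil => simp [gval_nil]; split_ifs <;> simp_all
    | cons z2 r =>
      have hne : z2 :: r ≠ [] := List.cons_ne_nil _ _
      have hzip : (z :: z2 :: r).zip (z :: z2 :: r).tail
          = (z, z2) :: ((z2 :: r).zip (z2 :: r).tail) := by simp
      rw [hzip]
      simp only [gval_cons, Finset.sum_add_distrib]
      have h2 := ih hne
      have h1 := egdiv f (z, z2) m
      have hlast : (z :: z2 :: r).getLast hp = (z2 :: r).getLast hne := by
        exact List.getLast_cons hne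
      have hhead : (z :: z2 :: r).head hp = z := rfl
      rw [hlast, hhead]
      have : (∑ u, egval f (z, z2) u m) + (∑ u, gval f ((z2 :: r).zip (z2 :: r).tail) u m)
          - ((∑ u, egval f (z, z2) m u) + (∑ u, gval f ((z2 :: r).zip (z2 :: r).tail) m u))
          = ((∑ u, egval f (z, z2) u m) - (∑ u, egval f (z, z2) m u))
            + ((∑ u, gval f ((z2 :: r).zip (z2 :: r).tail) u m)
              - (∑ u, gval f ((z2 :: r).zip (z2 :: r).tail) m u)) := by ring
      rw [this, h1, h2]
      simp only [List.head_cons]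
      split_ifs <;> simp_all

lemma chain'_zip {r : V → V → Prop} :
    ∀ {p : List V}, List.IsChain r p → ∀ e ∈ p.zip p.tail, r e.1 e.2 := by
  intro p
  induction p with
  | nil => intro _ e he; simp at he
  | cons z t ih =>
    intro hc e he
    cases t with
    | nil => simp at he
    | cons z2 r' =>
      rw [List.isChain_cons_cons] at hc
      have hzip : (z :: z2 :: r').zip (z :: z2 :: r').tail
          = (z, z2) :: ((z2 :: r').zip (z2 :: r').tail) := by simp
      rw [hzip] at he
      rcases List.mem_cons.1 he with h | h
      · subst h; exact hc.1
      · exact ih hc.2 e h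

lemma gval_nonpos (f : V → V → ℝ) (E : List (V × V)) (hrev : ∀ e ∈ E, 0 < f e.2 e.1)
    (u v : V) : gval f E u v ≤ 0 := by
  induction E with
  | nil => simp [gval_nil]
  | cons e E ih =>
    rw [gval_cons]
    have h1 : egval f e u v ≤ 0 := by
      unfold egval
      rw [if_pos (hrev e (List.mem_cons_self))]
      split_ifs <;> norm_num
    have h2 := ih fun e' he' => hrev e' (List.mem_cons_of_mem _ he')
    linarith

lemma gval_sink {N : FlowNetwork V} {f : V → V → ℝ} (hf : IsFlow N f)
    {E : List (V × V)} (hE : ∀ e ∈ E, Res N f e.1 e.2) {d : V} (hd : d ∈ N.sinks) (u : V) :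
    gval f E d u = 0 := by
  induction E with
  | nil => simp [gval_nil]
  | cons e E ih =>
    rw [gval_cons]
    have he := hE e (List.mem_cons_self)
    have h1 : egval f e d u = 0 := by
      unfold egval
      by_cases hdir : 0 < f e.2 e.1
      · rw [if_pos hdir, if_neg]
        rintro ⟨h2, h3⟩
        rw [← h2] at hdir
        rw [hf.2.2.2.1 d hd e.1] at hdir
        exact lt_irrefl 0 hdir
      · rw [if_neg hdir, if_neg]
        rintro ⟨h2, h3⟩
        rcases he with ⟨hns, _⟩ | hpos
        · rw [← h2] at hns; exact hns hd
        · exact hdir hpos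
    rw [h1, ih fun e' he' => hE e' (List.mem_cons_of_mem _ he'), add_zero]

lemma augment {N : FlowNetwork V} {f : V → V → ℝ} (hf : IsFlow N f)
    {a b : V} (p : List V) (hpne : p ≠ []) (hchain : p.IsChain (Res N f))
    (ha : p.head hpne = a) (hb : p.getLast hpne = b) (hab : a ≠ b)
    (haend : a = N.source ∨ a ∈ N.sinks) (hbend : b = N.source ∨ b ∈ N.sinks)
    (hbs : b ∈ N.sinks → inflow f b < (N.sinkCap b : ℝ)) :
    ∃ (f' : V → V → ℝ) (δ : ℝ), 0 < δ ∧ IsFlow N f' ∧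
      (∀ d ∈ N.sinks, inflow f' d
         = inflow f d + δ * ((if d = b then 1 else 0) - (if d = a then 1 else 0))) ∧
      ((∀ e ∈ p.zip p.tail, 0 < f e.2 e.1) → ∑ u, ∑ x, f' u x < ∑ u, ∑ x, f u x) := by
  obtain ⟨hf0, hfc, hfcons, hfs0, hfsc⟩ := hf
  set E := p.zip p.tail with hEdef
  have hE : ∀ e ∈ E, Res N f e.1 e.2 := chain'_zip hchain
  set slack : V × V → ℝ :=
    fun e => if 0 < f e.2 e.1 then f e.2 e.1 else (N.cap e.1 e.2 : ℝ) - f e.1 e.2 with hslack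
  set init : ℝ := if b ∈ N.sinks then (N.sinkCap b : ℝ) - inflow f b else 1 with hinit
  set C : Finset ℝ := insert init (E.map slack).toFinset with hC
  have hCne : C.Nonempty := ⟨init, Finset.mem_insert_self _ _⟩
  set δ0 : ℝ := C.min' hCne with hδ0
  have hCpos : ∀ c ∈ C, 0 < c := by
    intro c hc
    rcases Finset.mem_insert.1 hc with h | h
    · subst h
      rw [hinit]
      split_ifs with h'
      · linarith [hbs h']
      · norm_num
    · obtain ⟨e, heE, rfl⟩ := List.mem_map.1 (List.mem_toFinset.1 h)
      rw [hslack]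
      by_cases hdir : 0 < f e.2 e.1
      · simpa [hdir] using hdir
      · rcases hE e heE with ⟨_, hlt⟩ | hpos
        · simp only [if_neg hdir]; linarith
        · exact absurd hpos hdir
  have hδ0pos : 0 < δ0 := hCpos _ (C.min'_mem hCne)
  have hδ0init : δ0 ≤ init := Finset.min'_le _ _ (Finset.mem_insert_self _ _)
  have hδ0slack : ∀ e ∈ E, δ0 ≤ slack e := fun e he =>
    Finset.min'_le _ _ (Finset.mem_insert_of_mem (List.mem_toFinset.2 (List.mem_map_of_mem he)))
  set L : ℝ := (E.length : ℝ) with hL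
  have hLnn : 0 ≤ L := by positivity
  set δ : ℝ := δ0 / (L + 1) with hδ
  have hδpos : 0 < δ := by positivity
  have hδmul : δ * (L + 1) = δ0 := div_mul_cancel₀ _ (by positivity)
  have hδL : δ * L ≤ δ0 := by nlinarith
  have hδle : δ ≤ δ0 := by nlinarith
  set g : V → V → ℝ := gval f E with hg
  set f' : V → V → ℝ := fun u x => f u x + δ * g u x with hf'
  have hgabs : ∀ u x, |g u x| ≤ L := fun u x => abs_gval_le f E u x
  -- capacity bounds
  have hup : ∀ u x, f' u x ≤ (N.cap u x : ℝ) := by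
    intro u x
    by_cases hgp : 0 < g u x
    · obtain ⟨e, heE, h1, h2, h3⟩ := gval_pos f E u x hgp
      have hs := hδ0slack e heE
      rw [hslack] at hs
      simp only [h1, h2] at hs
      rw [if_neg h3] at hs
      have hb1 : g u x ≤ L := (abs_le.1 (hgabs u x)).2
      have : δ * g u x ≤ δ0 := le_trans (by nlinarith) hδL
      simp only [hf']
      linarith
    · push_neg at hgp
      have : δ * g u x ≤ 0 := mul_nonpos_of_nonneg_of_nonpos hδpos.le hgp
      simp only [hf']
      linarith [hfc u x]
  have hlo : ∀ u x, 0 ≤ f' u x := by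
    intro u x
    by_cases hgn : g u x < 0
    · obtain ⟨e, heE, h1, h2, h3⟩ := gval_neg f E u x hgn
      have hs := hδ0slack e heE
      rw [hslack] at hs
      simp only [h1, h2] at hs
      rw [if_pos h3] at hs
      have hb1 : -L ≤ g u x := (abs_le.1 (hgabs u x)).1
      have : -δ0 ≤ δ * g u x := by nlinarith
      simp only [hf']
      linarith
    · push_neg at hgn
      have : 0 ≤ δ * g u x := mul_nonneg hδpos.le hgn
      simp only [hf']
      linarith [hf0 u x]
  have hsink0 : ∀ d ∈ N.sinks, ∀ u, f' d u = 0 := by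
    intro d hd u
    simp only [hf']
    rw [hfs0 d hd u]
    have hgs : g d u = 0 := by
      rw [hg]; exact gval_sink ⟨hf0, hfc, hfcons, hfs0, hfsc⟩ hE hd u
    rw [hgs, mul_zero, add_zero]
  have hdg : ∀ m, (∑ u, g u m) - (∑ u, g m u)
      = (if m = b then (1 : ℝ) else 0) - (if m = a then 1 else 0) := by
    intro m
    rw [← ha, ← hb, hg]
    exact gdiv f m p hpne
  have hinflow : ∀ m, inflow f' m = inflow f m + δ * ∑ u, g u m := by
    intro m
    simp only [inflow, hf', Finset.sum_add_distrib, Finset.mul_sum]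
  have houtflow : ∀ m, outflow f' m = outflow f m + δ * ∑ u, g m u := by
    intro m
    simp only [outflow, hf', Finset.sum_add_distrib, Finset.mul_sum]
  have hsinkg : ∀ d ∈ N.sinks, (∑ u, g d u) = 0 := by
    intro d hd
    refine Finset.sum_eq_zero fun u _ => ?_
    rw [hg]; exact gval_sink ⟨hf0, hfc, hfcons, hfs0, hfsc⟩ hE hd u
  have hsinkin : ∀ d ∈ N.sinks, inflow f' d
      = inflow f d + δ * ((if d = b then 1 else 0) - (if d = a then 1 else 0)) := by
    intro d hd
    rw [hinflow d, ← hdg d, hsinkg d hd]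
    ring
  have hflow' : IsFlow N f' := by
    refine ⟨hlo, hup, ?_, hsink0, ?_⟩
    · intro m hmsrc hmsink
      have hma : m ≠ a := by
        rcases haend with h | h
        · rw [h]; exact hmsrc
        · intro hh; rw [hh] at hmsink; exact hmsink h
      have hmb : m ≠ b := by
        rcases hbend with h | h
        · rw [h]; exact hmsrc
        · intro hh; rw [hh] at hmsink; exact hmsink h
      have h1 := hdg m
      rw [if_neg hma, if_neg hmb] at h1
      have h2 : (∑ u, g u m) - (∑ u, g m u) = 0 := by rw [h1]; ring
      rw [hinflow m, houtflow m, hfcons m hmsrc hmsink]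
      nlinarith [h2]
    · intro d hd
      rw [hsinkin d hd]
      by_cases hdb : d = b
      · have hda : d ≠ a := by rw [hdb]; exact fun h => hab (h.symm)
        rw [if_pos hdb, if_neg hda]
        have hbsink : b ∈ N.sinks := by rw [← hdb]; exact hd
        have : init = (N.sinkCap b : ℝ) - inflow f b := by rw [hinit, if_pos hbsink]
        rw [hdb]
        have hδi : δ ≤ (N.sinkCap b : ℝ) - inflow f b := by
          rw [← this]; exact le_trans hδle hδ0init
        linarith
      · rw [if_neg hdb]
        have hle : inflow f d ≤ (N.sinkCap d : ℝ) := hfsc d hd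
        by_cases hda : d = a
        · rw [if_pos hda]; nlinarith
        · rw [if_neg hda]; simpa using hle
  refine ⟨f', δ, hδpos, hflow', hsinkin, ?_⟩
  intro hrev
  -- all edges reverse: strict decrease of total flow
  have hgnp : ∀ u x, g u x ≤ 0 := by
    intro u x; rw [hg]; exact gval_nonpos f E hrev u x
  -- p has at least two elements
  obtain ⟨z1, t, rfl⟩ : ∃ z1 t, p = z1 :: t := by
    cases p with
    | nil => exact absurd rfl hpne
    | cons z1 t => exact ⟨z1, t, rfl⟩
  obtain ⟨z2, r, rfl⟩ : ∃ z2 r, t = z2 :: r := by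
    cases t with
    | nil =>
      exfalso
      apply hab
      rw [← ha, ← hb]
      simp
    | cons z2 r => exact ⟨z2, r, rfl⟩
  have hE2 : E = (z1, z2) :: ((z2 :: r).zip (z2 :: r).tail) := by
    rw [hEdef]; simp
  have hgz : g z2 z1 ≤ -1 := by
    rw [hg, hE2, gval_cons]
    have h1 : egval f (z1, z2) z2 z1 = -1 := by
      unfold egval
      have hd : 0 < f z2 z1 := by
        have := hrev (z1, z2) (by rw [hE2]; exact List.mem_cons_self)
        exact this
      rw [if_pos hd, if_pos ⟨rfl, rfl⟩]
    have h2 : gval f ((z2 :: r).zip (z2 :: r).tail) z2 z1 ≤ 0 := by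
      apply gval_nonpos
      intro e he
      exact hrev e (by rw [hE2]; exact List.mem_cons_of_mem _ he)
    linarith
  have hsum_nonpos : ∀ u, (∑ x, g u x) ≤ 0 := fun u =>
    Finset.sum_nonpos fun x _ => hgnp u x
  have hrow : (∑ x, g z2 x) ≤ -1 := by
    have h1 : g z2 z1 + ∑ x ∈ Finset.univ.erase z1, g z2 x = ∑ x, g z2 x :=
      Finset.add_sum_erase _ _ (Finset.mem_univ z1)
    have h2 : (∑ x ∈ Finset.univ.erase z1, g z2 x) ≤ 0 :=
      Finset.sum_nonpos fun x _ => hgnp z2 x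
    linarith
  have htot : (∑ u, ∑ x, g u x) ≤ -1 := by
    have h1 : (∑ x, g z2 x) + ∑ u ∈ Finset.univ.erase z2, (∑ x, g u x)
        = ∑ u, ∑ x, g u x :=
      Finset.add_sum_erase Finset.univ (fun u => ∑ x, g u x) (Finset.mem_univ z2)
    have h2 : (∑ u ∈ Finset.univ.erase z2, (∑ x, g u x)) ≤ 0 :=
      Finset.sum_nonpos fun u _ => hsum_nonpos u
    linarith
  have hexp : (∑ u, ∑ x, f' u x) = (∑ u, ∑ x, f u x) + δ * ∑ u, ∑ x, g u x := by
    simp only [hf', Finset.sum_add_distrib, Finset.mul_sum]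
  rw [hexp]
  nlinarith

lemma inflow_nonneg {N : FlowNetwork V} {f : V → V → ℝ} (hf : IsFlow N f) (x : V) :
    0 ≤ inflow f x :=
  Finset.sum_nonneg fun u _ => hf.1 u x

lemma exists_pos_walk {N : FlowNetwork V} {f : V → V → ℝ} (hf : IsFlow N f)
    {e : V} (he : e ∈ N.sinks) (hpos : 0 < inflow f e) :
    Relation.ReflTransGen (fun u v => 0 < f u v) N.source e := by
  by_contra hc
  set T : Finset V := Finset.univ.filter
    (fun u => Relation.ReflTransGen (fun u v => 0 < f u v) u e) with hT
  have heT : e ∈ T := by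
    simp only [hT, Finset.mem_filter, Finset.mem_univ, true_and]
    exact Relation.ReflTransGen.refl
  have hsT : N.source ∉ T := by
    simp only [hT, Finset.mem_filter, Finset.mem_univ, true_and]
    exact hc
  have hinT : ∀ u x, x ∈ T → u ∉ T → f u x = 0 := by
    intro u x hx hu
    by_contra h
    have hpos' : 0 < f u x := lt_of_le_of_ne (hf.1 u x) (Ne.symm h)
    apply hu
    simp only [hT, Finset.mem_filter, Finset.mem_univ, true_and] at hx ⊢
    exact Relation.ReflTransGen.head hpos' hx
  have h1 : (∑ x ∈ T, inflow f x) ≤ ∑ u ∈ T, outflow f u := by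
    have heq : ∑ x ∈ T, inflow f x = ∑ x ∈ T, ∑ u ∈ T, f u x := by
      refine Finset.sum_congr rfl fun x hx => ?_
      rw [inflow, ← Finset.sum_add_sum_compl T (fun u => f u x)]
      have hz : ∑ u ∈ Tᶜ, f u x = 0 := Finset.sum_eq_zero fun u hu =>
        hinT u x hx (Finset.mem_compl.1 hu)
      rw [hz, add_zero]
    rw [heq, Finset.sum_comm]
    refine Finset.sum_le_sum fun u _ => ?_
    rw [outflow]
    exact Finset.sum_le_sum_of_subset_of_nonneg (Finset.subset_univ T)
      fun x _ _ => hf.1 u x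
  have h2 : (∑ u ∈ T, outflow f u) ≤ (∑ x ∈ T, inflow f x) - inflow f e := by
    have hsplit : outflow f e + ∑ u ∈ T.erase e, outflow f u = ∑ u ∈ T, outflow f u :=
      Finset.add_sum_erase T (outflow f) heT
    have hsplit2 : inflow f e + ∑ u ∈ T.erase e, inflow f u = ∑ u ∈ T, inflow f u :=
      Finset.add_sum_erase T (inflow f) heT
    have hoe : outflow f e = 0 := by
      rw [outflow]; exact Finset.sum_eq_zero fun u _ => hf.2.2.2.1 e he u
    have hterm : ∀ u ∈ T.erase e, outflow f u ≤ inflow f u := by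
      intro u hu
      have huT : u ∈ T := (Finset.mem_erase.1 hu).2
      by_cases hus : u ∈ N.sinks
      · have : outflow f u = 0 := by
          rw [outflow]; exact Finset.sum_eq_zero fun x _ => hf.2.2.2.1 u hus x
        rw [this]
        exact inflow_nonneg hf u
      · have husrc : u ≠ N.source := fun hh => hsT (hh ▸ huT)
        rw [hf.2.2.1 u husrc hus]
    have h3 : (∑ u ∈ T.erase e, outflow f u) ≤ ∑ u ∈ T.erase e, inflow f u :=
      Finset.sum_le_sum hterm
    linarith
  linarith

lemma exists_min_flow (N : FlowNetwork V) (B : Finset V) (val : ℝ)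
    (hex : ∃ f, IsFlow N f ∧ ∑ d ∈ B, inflow f d = val) :
    ∃ f, (IsFlow N f ∧ ∑ d ∈ B, inflow f d = val) ∧
      ∀ g, IsFlow N g → ∑ d ∈ B, inflow g d = val →
        (∑ u, ∑ x, f u x) ≤ ∑ u, ∑ x, g u x := by
  set K : Set (V → V → ℝ) := {f | IsFlow N f ∧ ∑ d ∈ B, inflow f d = val} with hK
  have hKne : K.Nonempty := hex
  have happly : ∀ u x : V, Continuous fun f : V → V → ℝ => f u x := fun u x =>
    (continuous_apply x).comp (continuous_apply u)
  have hinfl : ∀ m : V, Continuous fun f : V → V → ℝ => inflow f m := fun m => by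
    simpa only [inflow] using continuous_finset_sum Finset.univ
      fun u (_ : u ∈ Finset.univ) => happly u m
  have houtfl : ∀ m : V, Continuous fun f : V → V → ℝ => outflow f m := fun m => by
    simpa only [outflow] using continuous_finset_sum Finset.univ
      fun u (_ : u ∈ Finset.univ) => happly m u
  have hclosed : IsClosed K := by
    have h1 : K = (⋂ (u : V) (x : V), {f : V → V → ℝ | 0 ≤ f u x}) ∩
        ((⋂ (u : V) (x : V), {f : V → V → ℝ | f u x ≤ (N.cap u x : ℝ)}) ∩
        ((⋂ (m : V) (_ : m ≠ N.source) (_ : m ∉ N.sinks),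
            {f : V → V → ℝ | inflow f m = outflow f m}) ∩
        ((⋂ (d : V) (_ : d ∈ N.sinks) (u : V), {f : V → V → ℝ | f d u = 0}) ∩
        ((⋂ (d : V) (_ : d ∈ N.sinks), {f : V → V → ℝ | inflow f d ≤ (N.sinkCap d : ℝ)}) ∩
          {f : V → V → ℝ | ∑ d ∈ B, inflow f d = val})))) := by
      ext f
      simp only [hK, IsFlow, Set.mem_inter_iff, Set.mem_iInter, Set.mem_setOf_eq]
      tauto
    rw [h1]
    refine (isClosed_iInter fun u => isClosed_iInter fun x =>
        isClosed_le continuous_const (happly u x)).inter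
      ((isClosed_iInter fun u => isClosed_iInter fun x =>
        isClosed_le (happly u x) continuous_const).inter
      ((isClosed_iInter fun m => isClosed_iInter fun _ => isClosed_iInter fun _ =>
        isClosed_eq (hinfl m) (houtfl m)).inter
      ((isClosed_iInter fun d => isClosed_iInter fun _ => isClosed_iInter fun u =>
        isClosed_eq (happly d u) continuous_const).inter
      ((isClosed_iInter fun d => isClosed_iInter fun _ =>
        isClosed_le (hinfl d) continuous_const).inter
      (isClosed_eq (continuous_finset_sum B fun d _ => hinfl d) continuous_const)))))
  have hsub : K ⊆ Set.Icc (fun _ _ => (0 : ℝ)) (fun u x => (N.cap u x : ℝ)) := by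
    intro f hfK
    refine ⟨Pi.le_def.2 fun u => Pi.le_def.2 fun x => hfK.1.1 u x,
      Pi.le_def.2 fun u => Pi.le_def.2 fun x => hfK.1.2.1 u x⟩
  have hKc : IsCompact K := isCompact_Icc.of_isClosed_subset hclosed hsub
  have hcont : Continuous fun f : V → V → ℝ => ∑ u, ∑ x, f u x :=
    continuous_finset_sum Finset.univ fun u (_ : u ∈ Finset.univ) =>
      continuous_finset_sum Finset.univ fun x (_ : x ∈ Finset.univ) => happly u x
  obtain ⟨f0, hf0K, hf0min⟩ := hKc.exists_isMinOn hKne hcont.continuousOn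
  exact ⟨f0, hf0K, fun g hg1 hg2 => isMinOn_iff.1 hf0min g ⟨hg1, hg2⟩⟩

lemma sum_sinks_sdiff {N : FlowNetwork V} {f : V → V → ℝ} (hf : IsFlow N f)
    {S : Finset V} (hS : N.source ∈ S) :
    ∑ d ∈ N.sinks \ S, inflow f d = ∑ x ∈ Sᶜ, (inflow f x - outflow f x) := by
  rw [← Finset.sum_filter_add_sum_filter_not Sᶜ (· ∈ N.sinks)
    (fun x => inflow f x - outflow f x)]
  have h2 : ∑ x ∈ Sᶜ.filter (fun x => ¬ x ∈ N.sinks), (inflow f x - outflow f x) = 0 := by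
    refine Finset.sum_eq_zero fun x hx => ?_
    have hx1 : x ∉ S := Finset.mem_compl.1 (Finset.mem_filter.1 hx).1
    have hx2 : x ∉ N.sinks := (Finset.mem_filter.1 hx).2
    have hx3 : x ≠ N.source := fun hh => hx1 (hh ▸ hS)
    rw [hf.2.2.1 x hx3 hx2, sub_self]
  have h1 : Sᶜ.filter (· ∈ N.sinks) = N.sinks \ S := by
    ext x
    simp only [Finset.mem_filter, Finset.mem_compl, Finset.mem_sdiff]
    tauto
  rw [h2, add_zero, h1]
  refine Finset.sum_congr rfl fun d hd => ?_
  have hds : d ∈ N.sinks := (Finset.mem_sdiff.1 hd).1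
  have : outflow f d = 0 := by
    rw [outflow]; exact Finset.sum_eq_zero fun u _ => hf.2.2.2.1 d hds u
  rw [this, sub_zero]

lemma cutVal_cast (N : FlowNetwork V) (B S : Finset V) :
    (cutVal N B S : ℝ)
      = (∑ u ∈ S, ∑ x ∈ Sᶜ, (cap' N u x : ℝ)) + ∑ d ∈ B ∩ S, (N.sinkCap d : ℝ) := by
  rw [cutVal]; push_cast; ring

lemma flow_le_cut {N : FlowNetwork V} {f : V → V → ℝ} (hf : IsFlow N f)
    {B S : Finset V} (hB : B ⊆ N.sinks) (hS : N.source ∈ S) :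
    ∑ d ∈ B, inflow f d ≤ (cutVal N B S : ℝ) := by
  have hsplit : ∑ d ∈ B ∩ S, inflow f d + ∑ d ∈ B \ S, inflow f d
      = ∑ d ∈ B, inflow f d := by
    rw [← Finset.sum_filter_add_sum_filter_not B (· ∈ S) (inflow f),
      Finset.filter_mem_eq_inter, Finset.sdiff_eq_filter]
  have hb1 : ∑ d ∈ B ∩ S, inflow f d ≤ ∑ d ∈ B ∩ S, (N.sinkCap d : ℝ) :=
    Finset.sum_le_sum fun d hd => hf.2.2.2.2 d (hB (Finset.mem_inter.1 hd).1)
  have hb2 : ∑ d ∈ B \ S, inflow f d ≤ ∑ d ∈ N.sinks \ S, inflow f d :=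
    Finset.sum_le_sum_of_subset_of_nonneg (Finset.sdiff_subset_sdiff hB le_rfl)
      fun d _ _ => inflow_nonneg hf d
  have h4 := sum_sinks_sdiff hf hS
  have h5 := sum_div_compl f S
  have h6 : ∑ u ∈ S, ∑ x ∈ Sᶜ, f u x ≤ ∑ u ∈ S, ∑ x ∈ Sᶜ, (cap' N u x : ℝ) := by
    refine Finset.sum_le_sum fun u _ => Finset.sum_le_sum fun x _ => ?_
    by_cases hus : u ∈ N.sinks
    · rw [hf.2.2.2.1 u hus x, cap', if_pos hus]; simp
    · rw [cap', if_neg hus]; exact hf.2.1 u x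
  have h7 : 0 ≤ ∑ u ∈ Sᶜ, ∑ x ∈ S, f u x :=
    Finset.sum_nonneg fun u _ => Finset.sum_nonneg fun x _ => hf.1 u x
  rw [cutVal_cast]
  linarith

lemma exists_mincut (N : FlowNetwork V) (vB : ℝ) (B : Finset V) (hB : B ⊆ N.sinks)
    (hex : ∃ f, IsFlow N f ∧ ∑ d ∈ B, inflow f d = vB)
    (hub : ∀ f, IsFlow N f → ∑ d ∈ B, inflow f d ≤ vB) :
    ∃ S : Finset V, N.source ∈ S ∧ vB = (cutVal N B S : ℝ) := by
  obtain ⟨f, ⟨hfF, hfv⟩, hfmin⟩ := exists_min_flow N B vB hex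
  have hjunk : ∀ e ∈ N.sinks, e ∉ B → inflow f e = 0 := by
    intro e he heB
    by_contra h
    have hpos : 0 < inflow f e := lt_of_le_of_ne (inflow_nonneg hfF e) (Ne.symm h)
    have hreach := exists_pos_walk hfF he hpos
    obtain ⟨l, hlchain, hllast⟩ := List.exists_isChain_cons_of_relationReflTransGen hreach
    have hpne : (N.source :: l) ≠ [] := List.cons_ne_nil _ _
    have hqne : (N.source :: l).reverse ≠ [] := by simp
    have hchain : (N.source :: l).IsChain (fun u v => 0 < f u v) := hlchain
    have hqchain : ((N.source :: l).reverse).IsChain (Res N f) := by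
      rw [List.isChain_reverse]
      exact List.IsChain.imp (fun u v huv => Or.inr huv) hchain
    have hqhead : ((N.source :: l).reverse).head hqne = e := by
      rw [List.head_reverse]
      exact hllast
    have hqlast : ((N.source :: l).reverse).getLast hqne = N.source := by
      rw [List.getLast_reverse]
      exact List.head_cons
    have hesrc : e ≠ N.source := fun hh => N.source_not_sink (hh ▸ he)
    have hrev : ∀ e' ∈ ((N.source :: l).reverse).zip ((N.source :: l).reverse).tail,
        0 < f e'.2 e'.1 := by
      apply chain'_zip (r := fun u v => 0 < f v u)
      rw [List.isChain_reverse]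
      exact hchain
    obtain ⟨f', δ, hδ, hf'F, hf'in, hf'dec⟩ := augment hfF _ hqne hqchain hqhead hqlast
      hesrc (Or.inr he) (Or.inl rfl) (fun hb => absurd hb N.source_not_sink)
    have hsum : ∑ d ∈ B, inflow f' d = vB := by
      rw [← hfv]
      refine Finset.sum_congr rfl fun d hd => ?_
      have hds : d ∈ N.sinks := hB hd
      rw [hf'in d hds, if_neg (fun hh : d = N.source => N.source_not_sink (hh ▸ hds)),
        if_neg (fun hh : d = e => heB (hh ▸ hd))]
      ring
    have hmin := hfmin f' hf'F hsum
    have hdec := hf'dec hrev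
    linarith
  set S : Finset V := Finset.univ.filter
    (fun u => Relation.ReflTransGen (Res N f) N.source u) with hSdef
  have hmemS : ∀ u, u ∈ S ↔ Relation.ReflTransGen (Res N f) N.source u := by
    intro u; simp [hSdef]
  have hSsrc : N.source ∈ S := (hmemS _).2 Relation.ReflTransGen.refl
  have hsat : ∀ d ∈ B, d ∈ S → inflow f d = (N.sinkCap d : ℝ) := by
    intro d hd hdS
    have hds : d ∈ N.sinks := hB hd
    by_contra hne
    have hlt : inflow f d < (N.sinkCap d : ℝ) := lt_of_le_of_ne (hfF.2.2.2.2 d hds) hne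
    obtain ⟨l, hlchain, hllast⟩ :=
      List.exists_isChain_cons_of_relationReflTransGen ((hmemS d).1 hdS)
    have hpne : (N.source :: l) ≠ [] := List.cons_ne_nil _ _
    have hchain : (N.source :: l).IsChain (Res N f) := hlchain
    have hsrcd : N.source ≠ d := fun hh => N.source_not_sink (hh ▸ hds)
    obtain ⟨f', δ, hδ, hf'F, hf'in, _⟩ := augment hfF _ hpne hchain List.head_cons hllast
      hsrcd (Or.inl rfl) (Or.inr hds) (fun _ => hlt)
    have hsum : ∑ d' ∈ B, inflow f' d' = vB + δ := by
      have hterm : ∀ d' ∈ B, inflow f' d' = inflow f d' + δ * (if d' = d then 1 else 0) := by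
        intro d' hd'
        have hd's : d' ∈ N.sinks := hB hd'
        rw [hf'in d' hd's,
          if_neg (fun hh : d' = N.source => N.source_not_sink (hh ▸ hd's))]
        ring
      rw [Finset.sum_congr rfl hterm, Finset.sum_add_distrib, hfv, ← Finset.mul_sum,
        Finset.sum_ite_eq' B d (fun _ => (1 : ℝ)), if_pos hd]
      ring
    have hle := hub f' hf'F
    rw [hsum] at hle
    linarith
  have hcutsat : ∀ u ∈ S, ∀ x, x ∉ S → f u x = (cap' N u x : ℝ) := by
    intro u huS x hxS
    by_cases hus : u ∈ N.sinks
    · rw [hfF.2.2.2.1 u hus x, cap', if_pos hus]; simp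
    · rw [cap', if_neg hus]
      by_contra hne
      have hlt : f u x < (N.cap u x : ℝ) := lt_of_le_of_ne (hfF.2.1 u x) hne
      exact hxS ((hmemS x).2 (Relation.ReflTransGen.tail ((hmemS u).1 huS)
        (Or.inl ⟨hus, hlt⟩)))
  have hcutzero : ∀ u, u ∉ S → ∀ x ∈ S, f u x = 0 := by
    intro u huS x hxS
    by_contra hne
    have hpos : 0 < f u x := lt_of_le_of_ne (hfF.1 u x) (Ne.symm hne)
    exact huS ((hmemS u).2 (Relation.ReflTransGen.tail ((hmemS x).1 hxS) (Or.inr hpos)))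
  refine ⟨S, hSsrc, ?_⟩
  have hsplit : ∑ d ∈ B ∩ S, inflow f d + ∑ d ∈ B \ S, inflow f d
      = ∑ d ∈ B, inflow f d := by
    rw [← Finset.sum_filter_add_sum_filter_not B (· ∈ S) (inflow f),
      Finset.filter_mem_eq_inter, Finset.sdiff_eq_filter]
  have h2 : ∑ d ∈ B ∩ S, inflow f d = ∑ d ∈ B ∩ S, (N.sinkCap d : ℝ) :=
    Finset.sum_congr rfl fun d hd =>
      hsat d (Finset.mem_inter.1 hd).1 (Finset.mem_inter.1 hd).2
  have h3 : ∑ d ∈ B \ S, inflow f d = ∑ d ∈ N.sinks \ S, inflow f d := by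
    refine Finset.sum_subset (Finset.sdiff_subset_sdiff hB le_rfl) ?_
    intro d hd hdB
    have hds : d ∈ N.sinks := (Finset.mem_sdiff.1 hd).1
    have hdS : d ∉ S := (Finset.mem_sdiff.1 hd).2
    exact hjunk d hds fun hh => hdB (Finset.mem_sdiff.2 ⟨hh, hdS⟩)
  have h4 := sum_sinks_sdiff hfF hSsrc
  have h5 := sum_div_compl f S
  have h6 : ∑ u ∈ S, ∑ x ∈ Sᶜ, f u x = ∑ u ∈ S, ∑ x ∈ Sᶜ, (cap' N u x : ℝ) :=
    Finset.sum_congr rfl fun u hu => Finset.sum_congr rfl fun x hx =>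
      hcutsat u hu x (Finset.mem_compl.1 hx)
  have h7 : ∑ u ∈ Sᶜ, ∑ x ∈ S, f u x = 0 :=
    Finset.sum_eq_zero fun u hu => Finset.sum_eq_zero fun x hx =>
      hcutzero u (Finset.mem_compl.1 hu) x hx
  rw [← hfv, ← hsplit, h2, h3, h4, h5, h6, h7, cutVal_cast]
  ring

lemma cutVal_eq (N : FlowNetwork V) (B S : Finset V) :
    cutVal N B S = (∑ u : V, ∑ y : V, if u ∈ S ∧ y ∉ S then cap' N u y else 0)
      + ∑ d : V, (if d ∈ B ∧ d ∈ S then N.sinkCap d else 0) := by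
  rw [cutVal]
  congr 1
  · calc ∑ u ∈ S, ∑ y ∈ Sᶜ, cap' N u y
        = ∑ u ∈ S, ∑ y : V, (if y ∉ S then cap' N u y else 0) := by
          refine Finset.sum_congr rfl fun u _ => ?_
          rw [← Finset.sum_filter]
          congr 1
          ext y; simp
      _ = ∑ u : V, (if u ∈ S then ∑ y : V, (if y ∉ S then cap' N u y else 0) else 0) := by
          rw [← Finset.sum_filter]
          congr 1
          ext u; simp
      _ = ∑ u : V, ∑ y : V, (if u ∈ S ∧ y ∉ S then cap' N u y else 0) := by
          refine Finset.sum_congr rfl fun u _ => ?_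
          by_cases hu : u ∈ S <;> simp [hu]
  · calc ∑ d ∈ B ∩ S, N.sinkCap d
        = ∑ d : V, (if d ∈ B ∩ S then N.sinkCap d else 0) := by
          rw [← Finset.sum_filter]
          congr 1
          ext d; simp
      _ = ∑ d : V, (if d ∈ B ∧ d ∈ S then N.sinkCap d else 0) := by
          refine Finset.sum_congr rfl fun d _ => ?_
          simp [Finset.mem_inter]

lemma cut_submodular (N : FlowNetwork V) (A B : Finset V) (x : V) (hAB : A ⊆ B)
    (hxB : x ∉ B) (S T : Finset V) :
    cutVal N (insert x B) (S ∩ T) + cutVal N A (S ∪ T)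
      ≤ cutVal N (insert x A) S + cutVal N B T := by
  rw [cutVal_eq, cutVal_eq, cutVal_eq, cutVal_eq]
  have hedge : (∑ u : V, ∑ y : V, if u ∈ S ∩ T ∧ y ∉ S ∩ T then cap' N u y else 0)
      + (∑ u : V, ∑ y : V, if u ∈ S ∪ T ∧ y ∉ S ∪ T then cap' N u y else 0)
      ≤ (∑ u : V, ∑ y : V, if u ∈ S ∧ y ∉ S then cap' N u y else 0)
      + (∑ u : V, ∑ y : V, if u ∈ T ∧ y ∉ T then cap' N u y else 0) := by
    rw [← Finset.sum_add_distrib, ← Finset.sum_add_distrib]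
    refine Finset.sum_le_sum fun u _ => ?_
    rw [← Finset.sum_add_distrib, ← Finset.sum_add_distrib]
    refine Finset.sum_le_sum fun y _ => ?_
    simp only [Finset.mem_inter, Finset.mem_union]
    by_cases h1 : u ∈ S <;> by_cases h2 : u ∈ T <;> by_cases h3 : y ∈ S <;>
      by_cases h4 : y ∈ T <;> simp [h1, h2, h3, h4] <;> omega
  have hsink : (∑ d : V, if d ∈ insert x B ∧ d ∈ S ∩ T then N.sinkCap d else 0)
      + (∑ d : V, if d ∈ A ∧ d ∈ S ∪ T then N.sinkCap d else 0)
      ≤ (∑ d : V, if d ∈ insert x A ∧ d ∈ S then N.sinkCap d else 0)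
      + (∑ d : V, if d ∈ B ∧ d ∈ T then N.sinkCap d else 0) := by
    rw [← Finset.sum_add_distrib, ← Finset.sum_add_distrib]
    refine Finset.sum_le_sum fun d _ => ?_
    simp only [Finset.mem_inter, Finset.mem_union, Finset.mem_insert]
    have hdAB : d ∈ A → d ∈ B := fun h => hAB h
    by_cases h0 : d = x
    · subst h0
      have hdB : d ∉ B := hxB
      have hdA : d ∉ A := fun h => hxB (hAB h)
      by_cases h3 : d ∈ S <;> by_cases h4 : d ∈ T <;>
        simp [hdA, hdB, h3, h4] <;> omega
    · by_cases h1 : d ∈ A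
      · have h2 : d ∈ B := hdAB h1
        by_cases h3 : d ∈ S <;> by_cases h4 : d ∈ T <;>
          simp [h0, h1, h2, h3, h4] <;> omega
      · by_cases h2 : d ∈ B <;> by_cases h3 : d ∈ S <;> by_cases h4 : d ∈ T <;>
          simp [h0, h1, h2, h3, h4] <;> omega
  omega

end DeficitAux

/-- With `v B` the maximum flow into the sinks in `B`, the set function
`w B = β(B) − v B` is supermodular and integer-valued. -/
theorem deficit_game_supermodular_integer
    {V : Type*} [Fintype V] [DecidableEq V] (N : FlowNetwork V)
    (v : Finset V → ℝ)
    (hv : ∀ B ⊆ N.sinks,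
      (∃ f, IsFlow N f ∧ ∑ d ∈ B, inflow f d = v B) ∧
      (∀ f, IsFlow N f → ∑ d ∈ B, inflow f d ≤ v B))
    (w : Finset V → ℝ)
    (hw : ∀ B : Finset V, w B = (∑ k ∈ B, (N.sinkCap k : ℝ)) - v B) :
    (∀ B ⊆ N.sinks, ∃ n : ℤ, w B = (n : ℝ)) ∧
    (∀ (A B : Finset V) (x : V), A ⊆ B → B ⊆ N.sinks → x ∈ N.sinks → x ∉ B →
      w (insert x A) - w A ≤ w (insert x B) - w B) := by
  classical
  constructor
  · intro B hB
    obtain ⟨S, hSsrc, hveq⟩ :=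
      DeficitAux.exists_mincut N (v B) B hB (hv B hB).1 (hv B hB).2
    refine ⟨(∑ k ∈ B, (N.sinkCap k : ℤ)) - (DeficitAux.cutVal N B S : ℤ), ?_⟩
    rw [hw B, hveq]
    push_cast
    ring
  · intro A B x hAB hB hx hxB
    have hA : A ⊆ N.sinks := hAB.trans hB
    have hxA : x ∉ A := fun h => hxB (hAB h)
    have hiA : insert x A ⊆ N.sinks := Finset.insert_subset hx hA
    have hiB : insert x B ⊆ N.sinks := Finset.insert_subset hx hB
    obtain ⟨S, hSsrc, hvS⟩ := DeficitAux.exists_mincut N (v (insert x A)) (insert x A) hiA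
      (hv _ hiA).1 (hv _ hiA).2
    obtain ⟨T, hTsrc, hvT⟩ :=
      DeficitAux.exists_mincut N (v B) B hB (hv B hB).1 (hv B hB).2
    obtain ⟨f1, hf1F, hf1v⟩ := (hv (insert x B) hiB).1
    have h1 : v (insert x B) ≤ (DeficitAux.cutVal N (insert x B) (S ∩ T) : ℝ) := by
      rw [← hf1v]
      exact DeficitAux.flow_le_cut hf1F hiB (Finset.mem_inter.2 ⟨hSsrc, hTsrc⟩)
    obtain ⟨f2, hf2F, hf2v⟩ := (hv A hA).1
    have h2 : v A ≤ (DeficitAux.cutVal N A (S ∪ T) : ℝ) := by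
      rw [← hf2v]
      exact DeficitAux.flow_le_cut hf2F hA (Finset.mem_union_left _ hSsrc)
    have h3 := DeficitAux.cut_submodular N A B x hAB hxB S T
    have h3' : (DeficitAux.cutVal N (insert x B) (S ∩ T) : ℝ)
        + (DeficitAux.cutVal N A (S ∪ T) : ℝ)
        ≤ (DeficitAux.cutVal N (insert x A) S : ℝ) + (DeficitAux.cutVal N B T : ℝ) := by
      exact_mod_cast h3
    rw [← hvS, ← hvT] at h3'
    rw [hw, hw, hw, hw]
    rw [Finset.sum_insert hxA, Finset.sum_insert hxB]
    linarith
end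

section
/- In a flow network with sinks D and sink capacities β, a vector h ∈ ℝ^D is achievable (i.e., there is a feasible flow f with h_k = β_k − f(d_k) for all sinks d_k, where f(d_k) is the flow into sink d_k) if and only if h_k ≤ β_k for all k and h(B) ≥ w(B) for every B ⊆ D, where w(B) = β(B) − v(B) and v(B) is the maximum flow into sinks in B. -/
set_option linter.unusedSectionVars false
set_option maxHeartbeats 1600000

open Finset

section MegiddoAux

variable {V : Type*} [Fintype V] [DecidableEq V]

def Res (N : FlowNetwork V) (f : V → V → ℝ) (a b : V) : Prop :=
  (a ∉ N.sinks ∧ f a b < (N.cap a b : ℝ)) ∨ 0 < f b a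

def bump (f : V → V → ℝ) (u v : V) (ε : ℝ) : V → V → ℝ :=
  fun a b => if a = u ∧ b = v then f a b + ε else f a b

lemma bump_self (f : V → V → ℝ) (u v : V) (ε : ℝ) : bump f u v ε u v = f u v + ε := by
  simp [bump]

lemma bump_ne (f : V → V → ℝ) (u v : V) (ε : ℝ) {a b : V} (h : ¬(a = u ∧ b = v)) :
    bump f u v ε a b = f a b := by simp [bump, h]

lemma inflow_bump_self (f : V → V → ℝ) (u v : V) (ε : ℝ) :
    inflow (bump f u v ε) v = inflow f v + ε := by
  unfold inflow
  have h : ∀ a, bump f u v ε a v = f a v + (if a = u then ε else 0) := by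
    intro a; by_cases h : a = u <;> simp [bump, h]
  simp_rw [h, Finset.sum_add_distrib, Finset.sum_ite_eq' Finset.univ u fun _ => ε]
  simp

lemma inflow_bump_ne (f : V → V → ℝ) (u v : V) (ε : ℝ) {x : V} (hx : x ≠ v) :
    inflow (bump f u v ε) x = inflow f x := by
  unfold inflow
  exact Finset.sum_congr rfl fun a _ => bump_ne f u v ε (by simp [hx])

lemma outflow_bump_self (f : V → V → ℝ) (u v : V) (ε : ℝ) :
    outflow (bump f u v ε) u = outflow f u + ε := by
  unfold outflow
  have h : ∀ b, bump f u v ε u b = f u b + (if b = v then ε else 0) := by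
    intro b; by_cases h : b = v <;> simp [bump, h]
  simp_rw [h, Finset.sum_add_distrib, Finset.sum_ite_eq' Finset.univ v fun _ => ε]
  simp

lemma outflow_bump_ne (f : V → V → ℝ) (u v : V) (ε : ℝ) {x : V} (hx : x ≠ u) :
    outflow (bump f u v ε) x = outflow f x := by
  unfold outflow
  exact Finset.sum_congr rfl fun b _ => bump_ne f u v ε (by simp [hx])

/-- All the properties of the augmented flow `g` relative to `f` along a path
from `u` to `d` with vertex set `path`, augmenting amount `ε`. -/
def AugCond (N : FlowNetwork V) (f g : V → V → ℝ) (u d : V) (path : List V) (ε : ℝ) : Prop :=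
  (∀ a b, 0 ≤ g a b) ∧
  (∀ a b, g a b ≤ (N.cap a b : ℝ)) ∧
  (∀ s ∈ N.sinks, ∀ b, g s b = 0) ∧
  (∀ a b, (a ∉ path ∨ b ∉ path) → g a b = f a b) ∧
  (∀ x, x ≠ u → x ≠ d → inflow g x - outflow g x = inflow f x - outflow f x) ∧
  (inflow g u - outflow g u = inflow f u - outflow f u - ε) ∧
  (inflow g d - outflow g d = inflow f d - outflow f d + ε) ∧
  (∀ s ∈ N.sinks, s ≠ u → s ≠ d → inflow g s = inflow f s) ∧
  (u ∈ N.sinks → inflow g u = inflow f u - ε) ∧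
  (d ∈ N.sinks → inflow g d = inflow f d + ε)


lemma aug (N : FlowNetwork V) :
    ∀ (l : List V) (u d : V) (f : V → V → ℝ),
      (∀ a b, 0 ≤ f a b) → (∀ a b, f a b ≤ (N.cap a b : ℝ)) →
      (∀ s ∈ N.sinks, ∀ b, f s b = 0) →
      List.Chain (Res N f) u l → (u :: l).Nodup → l.getLast? = some d →
      ∀ δ : ℝ, 0 < δ →
      ∃ ε g, 0 < ε ∧ ε ≤ δ ∧ AugCond N f g u d (u :: l) ε := by
  intro l
  induction l with
  | nil => intro u d f _ _ _ _ _ hlast; simp at hlast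
  | cons v l' IH =>
    intro u d f hf0 hfc hfs hchain hnd hlast δ hδ
    rw [List.Chain, List.chain_cons] at hchain
    obtain ⟨hres, hchain'⟩ := hchain
    have hu_not : u ∉ v :: l' := (List.nodup_cons.mp hnd).1
    have hnd' : (v :: l').Nodup := (List.nodup_cons.mp hnd).2
    have huv : u ≠ v := fun h => hu_not (h ▸ List.mem_cons_self)
    cases l' with
    | nil =>
      -- single edge u → d (here v = d)
      have hd : v = d := by simpa using hlast
      subst hd
      rcases hres with ⟨hu, hlt⟩ | hpos
      · -- forward
        set ε := min δ ((N.cap u v : ℝ) - f u v) with hε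
        have hε0 : 0 < ε := lt_min hδ (sub_pos.mpr hlt)
        have hεr : ε ≤ (N.cap u v : ℝ) - f u v := min_le_right _ _
        refine ⟨ε, bump f u v ε, hε0, min_le_left _ _, ?_, ?_, ?_, ?_, ?_, ?_, ?_, ?_, ?_, ?_⟩
        · intro a b
          by_cases hab : a = u ∧ b = v
          · have h1 : bump f u v ε a b = f a b + ε := by simp [bump, hab]
            rw [h1]; linarith [hf0 a b]
          · rw [bump_ne _ _ _ _ hab]; exact hf0 a b
        · intro a b
          by_cases hab : a = u ∧ b = v
          · have h1 : bump f u v ε a b = f a b + ε := by simp [bump, hab]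
            rw [h1, hab.1, hab.2]; linarith
          · rw [bump_ne _ _ _ _ hab]; exact hfc a b
        · intro s hs b
          rw [bump_ne _ _ _ _ (by rintro ⟨rfl, _⟩; exact hu hs)]
          exact hfs s hs b
        · intro a b hab
          refine bump_ne _ _ _ _ ?_
          rintro ⟨ha, hb⟩
          rcases hab with hab | hab
          · exact hab (by rw [ha]; exact List.mem_cons_self)
          · exact hab (by rw [hb]; simp)
        · intro x hxu hxd
          rw [inflow_bump_ne _ _ _ _ hxd, outflow_bump_ne _ _ _ _ hxu]
        · rw [inflow_bump_ne _ _ _ _ huv, outflow_bump_self]; ring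
        · rw [inflow_bump_self, outflow_bump_ne _ _ _ _ (Ne.symm huv)]; ring
        · intro s _ _ hsd
          exact inflow_bump_ne _ _ _ _ hsd
        · intro hus; exact absurd hus hu
        · intro _; exact inflow_bump_self f u v ε
      · -- backward
        set ε := min δ (f v u) with hε
        have hε0 : 0 < ε := lt_min hδ hpos
        have hεr : ε ≤ f v u := min_le_right _ _
        have hvs : v ∉ N.sinks := fun hv => by
          have h0 := hfs v hv u; rw [h0] at hpos; exact lt_irrefl 0 hpos
        refine ⟨ε, bump f v u (-ε), hε0, min_le_left _ _, ?_, ?_, ?_, ?_, ?_, ?_, ?_, ?_, ?_, ?_⟩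
        · intro a b
          by_cases hab : a = v ∧ b = u
          · have h1 : bump f v u (-ε) a b = f a b + (-ε) := by simp [bump, hab]
            rw [h1, hab.1, hab.2]; linarith
          · rw [bump_ne _ _ _ _ hab]; exact hf0 a b
        · intro a b
          by_cases hab : a = v ∧ b = u
          · have h1 : bump f v u (-ε) a b = f a b + (-ε) := by simp [bump, hab]
            rw [h1]; linarith [hfc a b]
          · rw [bump_ne _ _ _ _ hab]; exact hfc a b
        · intro s hs b
          rw [bump_ne _ _ _ _ (by rintro ⟨rfl, _⟩; exact hvs hs)]
          exact hfs s hs b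
        · intro a b hab
          refine bump_ne _ _ _ _ ?_
          rintro ⟨ha, hb⟩
          rcases hab with hab | hab
          · exact hab (by rw [ha]; simp)
          · exact hab (by rw [hb]; exact List.mem_cons_self)
        · intro x hxu hxd
          rw [inflow_bump_ne _ _ _ _ hxu, outflow_bump_ne _ _ _ _ hxd]
        · rw [inflow_bump_self, outflow_bump_ne _ _ _ _ huv]; ring
        · rw [inflow_bump_ne _ _ _ _ (Ne.symm huv), outflow_bump_self]; ring
        · intro s _ hsu _
          exact inflow_bump_ne _ _ _ _ hsu
        · intro _
          rw [inflow_bump_self]; ring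
        · intro hvs'; exact absurd hvs' hvs
    | cons w t =>
      -- inductive step
      have hlast' : (w :: t).getLast? = some d := by
        rw [List.getLast?_cons_cons] at hlast; exact hlast
      have hd_mem : d ∈ w :: t := by
        have h2 : (w :: t).getLast (by simp) = d := by
          rwa [List.getLast?_eq_getLast (l := w :: t) (by simp), Option.some_inj] at hlast'
        rw [← h2]; exact List.getLast_mem _
      have hdv : d ≠ v := fun h => (List.nodup_cons.mp hnd').1 (h ▸ hd_mem)
      have hdu : d ≠ u := fun h => hu_not (h ▸ List.mem_cons_of_mem v hd_mem)
      by_cases hfwd : u ∉ N.sinks ∧ f u v < (N.cap u v : ℝ)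
      · -- use forward residual on first edge
        obtain ⟨hu_sink, hlt⟩ := hfwd
        have hr : (0:ℝ) < (N.cap u v : ℝ) - f u v := sub_pos.mpr hlt
        obtain ⟨ε, g', hε0, hεδ', cond'⟩ :=
          IH v d f hf0 hfc hfs hchain' hnd' hlast' (min δ ((N.cap u v : ℝ) - f u v))
            (lt_min hδ hr)
        obtain ⟨g0, gc, gs, goff, gnet, gnu, gnd, gsin, gku, gkd⟩ := cond'
        have hεδ : ε ≤ δ := hεδ'.trans (min_le_left _ _)
        have hεr : ε ≤ (N.cap u v : ℝ) - f u v := hεδ'.trans (min_le_right _ _)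
        have hgu1 : ∀ b, g' u b = f u b := fun b => goff u b (Or.inl hu_not)
        have hgu2 : ∀ a, g' a u = f a u := fun a => goff a u (Or.inr hu_not)
        have hinu : inflow g' u = inflow f u := Finset.sum_congr rfl fun a _ => hgu2 a
        have houu : outflow g' u = outflow f u := Finset.sum_congr rfl fun b _ => hgu1 b
        refine ⟨ε, bump g' u v ε, hε0, hεδ, ?_, ?_, ?_, ?_, ?_, ?_, ?_, ?_, ?_, ?_⟩
        · intro a b
          by_cases hab : a = u ∧ b = v
          · have h1 : bump g' u v ε a b = g' a b + ε := by simp [bump, hab]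
            rw [h1]; linarith [g0 a b]
          · rw [bump_ne _ _ _ _ hab]; exact g0 a b
        · intro a b
          by_cases hab : a = u ∧ b = v
          · have h1 : bump g' u v ε a b = g' a b + ε := by simp [bump, hab]
            rw [h1, hab.1, hab.2, hgu1 v]; linarith
          · rw [bump_ne _ _ _ _ hab]; exact gc a b
        · intro s hs b
          rw [bump_ne _ _ _ _ (by rintro ⟨rfl, _⟩; exact hu_sink hs)]
          exact gs s hs b
        · intro a b hab
          have h1 : ¬(a = u ∧ b = v) := by
            rintro ⟨ha, hb⟩
            rcases hab with hab | hab
            · exact hab (by rw [ha]; exact List.mem_cons_self)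
            · exact hab (by rw [hb]; simp)
          rw [bump_ne _ _ _ _ h1]
          refine goff a b ?_
          rcases hab with hab | hab
          · exact Or.inl fun hmem => hab (List.mem_cons_of_mem u hmem)
          · exact Or.inr fun hmem => hab (List.mem_cons_of_mem u hmem)
        · intro x hxu hxd
          by_cases hxv : x = v
          · subst hxv
            rw [inflow_bump_self, outflow_bump_ne _ _ _ _ (Ne.symm huv)]
            linarith [gnu]
          · rw [inflow_bump_ne _ _ _ _ hxv, outflow_bump_ne _ _ _ _ hxu]
            exact gnet x hxv hxd
        · rw [inflow_bump_ne _ _ _ _ huv, outflow_bump_self, hinu, houu]; ring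
        · rw [inflow_bump_ne _ _ _ _ hdv, outflow_bump_ne _ _ _ _ hdu]
          exact gnd
        · intro s hs hsu hsd
          by_cases hsv : s = v
          · subst hsv
            rw [inflow_bump_self, gku hs]; ring
          · rw [inflow_bump_ne _ _ _ _ hsv]
            exact gsin s hs hsv hsd
        · intro hus; exact absurd hus hu_sink
        · intro hds
          rw [inflow_bump_ne _ _ _ _ hdv]
          exact gkd hds
      · -- backward residual on first edge
        have hpos : 0 < f v u := by
          rcases hres with h | h
          · exact absurd h hfwd
          · exact h
        have hvs : v ∉ N.sinks := fun hv => by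
          have h0 := hfs v hv u; rw [h0] at hpos; exact lt_irrefl 0 hpos
        obtain ⟨ε, g', hε0, hεδ', cond'⟩ :=
          IH v d f hf0 hfc hfs hchain' hnd' hlast' (min δ (f v u)) (lt_min hδ hpos)
        obtain ⟨g0, gc, gs, goff, gnet, gnu, gnd, gsin, gku, gkd⟩ := cond'
        have hεδ : ε ≤ δ := hεδ'.trans (min_le_left _ _)
        have hεr : ε ≤ f v u := hεδ'.trans (min_le_right _ _)
        have hgu1 : ∀ b, g' u b = f u b := fun b => goff u b (Or.inl hu_not)
        have hgu2 : ∀ a, g' a u = f a u := fun a => goff a u (Or.inr hu_not)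
        have hinu : inflow g' u = inflow f u := Finset.sum_congr rfl fun a _ => hgu2 a
        have houu : outflow g' u = outflow f u := Finset.sum_congr rfl fun b _ => hgu1 b
        have hgvu : g' v u = f v u := hgu2 v
        refine ⟨ε, bump g' v u (-ε), hε0, hεδ, ?_, ?_, ?_, ?_, ?_, ?_, ?_, ?_, ?_, ?_⟩
        · intro a b
          by_cases hab : a = v ∧ b = u
          · have h1 : bump g' v u (-ε) a b = g' a b + (-ε) := by simp [bump, hab]
            rw [h1, hab.1, hab.2, hgvu]; linarith
          · rw [bump_ne _ _ _ _ hab]; exact g0 a b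
        · intro a b
          by_cases hab : a = v ∧ b = u
          · have h1 : bump g' v u (-ε) a b = g' a b + (-ε) := by simp [bump, hab]
            rw [h1]; linarith [gc a b, hε0]
          · rw [bump_ne _ _ _ _ hab]; exact gc a b
        · intro s hs b
          rw [bump_ne _ _ _ _ (by rintro ⟨rfl, _⟩; exact hvs hs)]
          exact gs s hs b
        · intro a b hab
          have h1 : ¬(a = v ∧ b = u) := by
            rintro ⟨ha, hb⟩
            rcases hab with hab | hab
            · exact hab (by rw [ha]; simp)
            · exact hab (by rw [hb]; exact List.mem_cons_self)
          rw [bump_ne _ _ _ _ h1]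
          refine goff a b ?_
          rcases hab with hab | hab
          · exact Or.inl fun hmem => hab (List.mem_cons_of_mem u hmem)
          · exact Or.inr fun hmem => hab (List.mem_cons_of_mem u hmem)
        · intro x hxu hxd
          by_cases hxv : x = v
          · subst hxv
            rw [inflow_bump_ne _ _ _ _ (Ne.symm huv), outflow_bump_self]
            linarith [gnu]
          · rw [inflow_bump_ne _ _ _ _ hxu, outflow_bump_ne _ _ _ _ hxv]
            exact gnet x hxv hxd
        · rw [inflow_bump_self, outflow_bump_ne _ _ _ _ huv, hinu, houu]; ring
        · rw [inflow_bump_ne _ _ _ _ hdu, outflow_bump_ne _ _ _ _ hdv]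
          exact gnd
        · intro s hs hsu hsd
          rw [inflow_bump_ne _ _ _ _ hsu]
          exact gsin s hs (fun h => hvs (h ▸ hs)) hsd
        · intro _
          rw [inflow_bump_self, hinu]; ring
        · intro hds
          rw [inflow_bump_ne _ _ _ _ hdu]
          exact gkd hds

/-- shorten a chain to a nodup chain with the same endpoints -/
lemma chain_nodup {r : V → V → Prop} :
    ∀ (l : List V) (u : V), List.Chain r u l →
      ∃ l', List.Chain r u l' ∧ (u :: l').Nodup ∧
        (u :: l').getLast? = (u :: l).getLast? := by
  intro l
  induction l with
  | nil => intro u _; exact ⟨[], List.Chain.nil, by simp, rfl⟩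
  | cons v t IH =>
    intro u hchain
    rw [List.Chain, List.chain_cons] at hchain
    obtain ⟨hr, hchain'⟩ := hchain
    obtain ⟨t', hc', hnd', hlast'⟩ := IH v hchain'
    by_cases hu : u ∈ v :: t'
    · obtain ⟨s1, s2, hsplit⟩ := List.append_of_mem hu
      have hsuf : (u :: s2) <:+ (v :: t') := ⟨s1, hsplit.symm⟩
      have hchain2 : List.Chain r u s2 := by
        have hch : List.Chain' r (u :: v :: t') := List.isChain_cons_cons.mpr ⟨hr, hc'⟩
        have hsuf2 : (u :: s2) <:+ (u :: v :: t') := hsuf.trans (List.suffix_cons _ _)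
        exact List.IsChain.suffix hch hsuf2
      have hnd2 : (u :: s2).Nodup := hnd'.sublist hsuf.sublist
      refine ⟨s2, hchain2, hnd2, ?_⟩
      have h1 : (v :: t').getLast? = (u :: s2).getLast? := by
        rw [hsplit, List.getLast?_append_cons]
      cases t with
      | nil =>
        -- (u :: [v]).getLast? = some v, and (v :: t').getLast? = (v::t).getLast? = some v
        rw [List.getLast?_cons_cons, ← hlast', h1]
      | cons a b =>
        rw [List.getLast?_cons_cons, ← hlast', h1]
    · refine ⟨v :: t', List.chain_cons.mpr ⟨hr, hc'⟩, List.nodup_cons.mpr ⟨hu, hnd'⟩, ?_⟩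
      rw [List.getLast?_cons_cons, List.getLast?_cons_cons, hlast']

/-- the cut bound: flow into sinks outside the residual-closed set `p` is
maximal for `f`. -/
lemma cut_bound (N : FlowNetwork V) (f g : V → V → ℝ)
    (hfF : IsFlow N f) (hgF : IsFlow N g)
    (p : V → Prop) [DecidablePred p] (hsrc : p N.source)
    (hcl : ∀ a b, p a → Res N f a b → p b) :
    ∑ d ∈ N.sinks.filter (fun d => ¬ p d), inflow g d ≤
      ∑ d ∈ N.sinks.filter (fun d => ¬ p d), inflow f d := by
  have key : ∀ e, IsFlow N e →
      ∑ d ∈ N.sinks.filter (fun d => ¬ p d), inflow e d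
        = ∑ x ∈ univ.filter (fun y => ¬ p y), ∑ y ∈ univ.filter p, (e y x - e x y) := by
    intro e heF
    obtain ⟨he0, hec, hcons, hes, hecap⟩ := heF
    have step1 : ∑ d ∈ N.sinks.filter (fun d => ¬ p d), inflow e d
        = ∑ x ∈ univ.filter (fun y => ¬ p y), (inflow e x - outflow e x) := by
      rw [← Finset.sum_filter_add_sum_filter_not (univ.filter (fun y => ¬ p y))
        (fun x => x ∈ N.sinks) (fun x => inflow e x - outflow e x)]
      have h2 : ∑ x ∈ (univ.filter (fun y => ¬ p y)).filter (fun x => x ∉ N.sinks),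
          (inflow e x - outflow e x) = 0 := by
        refine Finset.sum_eq_zero fun x hx => ?_
        simp only [Finset.mem_filter, Finset.mem_univ, true_and] at hx
        have hxs : x ≠ N.source := fun h => hx.1 (h ▸ hsrc)
        rw [hcons x hxs hx.2]; ring
      rw [h2, add_zero]
      have h3 : (univ.filter (fun y => ¬ p y)).filter (fun x => x ∈ N.sinks)
          = N.sinks.filter (fun d => ¬ p d) := by
        ext x
        simp only [Finset.mem_filter, Finset.mem_univ, true_and]
        tauto
      rw [h3]
      refine Finset.sum_congr rfl fun x hx => ?_
      simp only [Finset.mem_filter] at hx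
      have h4 : outflow e x = 0 := by
        unfold outflow; exact Finset.sum_eq_zero fun b _ => hes x hx.1 b
      rw [h4, sub_zero]
    rw [step1]
    have step2 : ∀ x, inflow e x - outflow e x
        = ∑ y ∈ univ.filter p, (e y x - e x y)
          + ∑ y ∈ univ.filter (fun y => ¬ p y), (e y x - e x y) := by
      intro x
      rw [Finset.sum_filter_add_sum_filter_not univ p (fun y => (e y x - e x y))]
      unfold inflow outflow
      rw [← Finset.sum_sub_distrib]
    simp_rw [step2]
    rw [Finset.sum_add_distrib]
    have step3 : ∑ x ∈ univ.filter (fun y => ¬ p y),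
        ∑ y ∈ univ.filter (fun y => ¬ p y), (e y x - e x y) = 0 := by
      have hsplit : ∑ x ∈ univ.filter (fun y => ¬ p y),
          ∑ y ∈ univ.filter (fun y => ¬ p y), (e y x - e x y)
          = (∑ x ∈ univ.filter (fun y => ¬ p y), ∑ y ∈ univ.filter (fun y => ¬ p y), e y x)
            - ∑ x ∈ univ.filter (fun y => ¬ p y), ∑ y ∈ univ.filter (fun y => ¬ p y), e x y := by
        rw [← Finset.sum_sub_distrib]
        exact Finset.sum_congr rfl fun x _ => by rw [← Finset.sum_sub_distrib]
      have hcomm : ∑ x ∈ univ.filter (fun y => ¬ p y), ∑ y ∈ univ.filter (fun y => ¬ p y), e y x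
          = ∑ x ∈ univ.filter (fun y => ¬ p y), ∑ y ∈ univ.filter (fun y => ¬ p y), e x y :=
        Finset.sum_comm
      rw [hsplit, hcomm, sub_self]
    rw [step3, add_zero]
  rw [key f hfF, key g hgF]
  obtain ⟨hf0, hfc, _, hfs, _⟩ := hfF
  obtain ⟨hg0, hgc, _, hgs, _⟩ := hgF
  refine Finset.sum_le_sum fun x hx => Finset.sum_le_sum fun y hy => ?_
  simp only [Finset.mem_filter, Finset.mem_univ, true_and] at hx hy
  have hres : ¬ Res N f y x := fun h => hx (hcl y x hy h)
  have hnlt : ¬ (0 < f x y) := fun h => hres (Or.inr h)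
  have hfxy : f x y = 0 := le_antisymm (not_lt.mp hnlt) (hf0 x y)
  by_cases hys : y ∈ N.sinks
  · have h1 : f y x = 0 := hfs y hys x
    have h2 : g y x = 0 := hgs y hys x
    rw [h1, h2, hfxy]
    linarith [hg0 x y]
  · have h3 : ¬ f y x < (N.cap y x : ℝ) := fun hlt => hres (Or.inl ⟨hys, hlt⟩)
    have h4 : f y x = (N.cap y x : ℝ) := le_antisymm (hfc y x) (not_lt.mp h3)
    have h5 : g y x ≤ f y x := h4 ▸ hgc y x
    rw [hfxy]
    linarith [hg0 x y]

lemma exists_max_flow (N : FlowNetwork V) (x : V → ℝ) (hx0 : ∀ d ∈ N.sinks, 0 ≤ x d) :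
    ∃ f, (IsFlow N f ∧ ∀ d ∈ N.sinks, inflow f d ≤ x d) ∧
      ∀ g, IsFlow N g → (∀ d ∈ N.sinks, inflow g d ≤ x d) →
        ∑ d ∈ N.sinks, inflow g d ≤ ∑ d ∈ N.sinks, inflow f d := by
  classical
  set K : Set (V → V → ℝ) := {f | IsFlow N f ∧ ∀ d ∈ N.sinks, inflow f d ≤ x d} with hK
  have hcont_eval : ∀ u w, Continuous fun f : V → V → ℝ => f u w :=
    fun u w => (continuous_apply w).comp (continuous_apply u)
  have hcont_in : ∀ y, Continuous fun f : V → V → ℝ => inflow f y :=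
    fun y => continuous_finset_sum _ fun u _ => hcont_eval u y
  have hcont_out : ∀ y, Continuous fun f : V → V → ℝ => outflow f y :=
    fun y => continuous_finset_sum _ fun u _ => hcont_eval y u
  have hKclosed : IsClosed K := by
    have c1 : IsClosed {f : V → V → ℝ | ∀ u w, 0 ≤ f u w} := by
      rw [Set.setOf_forall]
      refine isClosed_iInter fun u => ?_
      rw [Set.setOf_forall]
      exact isClosed_iInter fun w => isClosed_le continuous_const (hcont_eval u w)
    have c2 : IsClosed {f : V → V → ℝ | ∀ u w, f u w ≤ (N.cap u w : ℝ)} := by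
      rw [Set.setOf_forall]
      refine isClosed_iInter fun u => ?_
      rw [Set.setOf_forall]
      exact isClosed_iInter fun w => isClosed_le (hcont_eval u w) continuous_const
    have c3 : IsClosed {f : V → V → ℝ |
        ∀ y, y ≠ N.source → y ∉ N.sinks → inflow f y = outflow f y} := by
      rw [Set.setOf_forall]
      refine isClosed_iInter fun y => ?_
      by_cases hy : y ≠ N.source ∧ y ∉ N.sinks
      · have he : {f : V → V → ℝ | y ≠ N.source → y ∉ N.sinks → inflow f y = outflow f y}
            = {f | inflow f y = outflow f y} := by
          ext f; simp [hy.1, hy.2]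
        rw [he]; exact isClosed_eq (hcont_in y) (hcont_out y)
      · have he : {f : V → V → ℝ | y ≠ N.source → y ∉ N.sinks → inflow f y = outflow f y}
            = Set.univ := by
          ext f; simp only [Set.mem_setOf_eq, Set.mem_univ, iff_true]
          intro h1' h2'; exact absurd ⟨h1', h2'⟩ hy
        rw [he]; exact isClosed_univ
    have c4 : IsClosed {f : V → V → ℝ | ∀ d ∈ N.sinks, ∀ u, f d u = 0} := by
      rw [Set.setOf_forall]
      refine isClosed_iInter fun d => ?_
      by_cases hd : d ∈ N.sinks
      · have he : {f : V → V → ℝ | d ∈ N.sinks → ∀ u, f d u = 0}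
            = {f | ∀ u, f d u = 0} := by ext f; simp [hd]
        rw [he, Set.setOf_forall]
        exact isClosed_iInter fun u => isClosed_eq (hcont_eval d u) continuous_const
      · have he : {f : V → V → ℝ | d ∈ N.sinks → ∀ u, f d u = 0} = Set.univ := by
          ext f; simp [hd]
        rw [he]; exact isClosed_univ
    have c5 : IsClosed {f : V → V → ℝ | ∀ d ∈ N.sinks, inflow f d ≤ (N.sinkCap d : ℝ)} := by
      rw [Set.setOf_forall]
      refine isClosed_iInter fun d => ?_
      by_cases hd : d ∈ N.sinks
      · have he : {f : V → V → ℝ | d ∈ N.sinks → inflow f d ≤ (N.sinkCap d : ℝ)}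
            = {f | inflow f d ≤ (N.sinkCap d : ℝ)} := by ext f; simp [hd]
        rw [he]; exact isClosed_le (hcont_in d) continuous_const
      · have he : {f : V → V → ℝ | d ∈ N.sinks → inflow f d ≤ (N.sinkCap d : ℝ)}
            = Set.univ := by ext f; simp [hd]
        rw [he]; exact isClosed_univ
    have c6 : IsClosed {f : V → V → ℝ | ∀ d ∈ N.sinks, inflow f d ≤ x d} := by
      rw [Set.setOf_forall]
      refine isClosed_iInter fun d => ?_
      by_cases hd : d ∈ N.sinks
      · have he : {f : V → V → ℝ | d ∈ N.sinks → inflow f d ≤ x d}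
            = {f | inflow f d ≤ x d} := by ext f; simp [hd]
        rw [he]; exact isClosed_le (hcont_in d) continuous_const
      · have he : {f : V → V → ℝ | d ∈ N.sinks → inflow f d ≤ x d} = Set.univ := by
          ext f; simp [hd]
        rw [he]; exact isClosed_univ
    have hKdef : K = ({f : V → V → ℝ | ∀ u w, 0 ≤ f u w}
        ∩ ({f | ∀ u w, f u w ≤ (N.cap u w : ℝ)}
        ∩ ({f | ∀ y, y ≠ N.source → y ∉ N.sinks → inflow f y = outflow f y}
        ∩ ({f | ∀ d ∈ N.sinks, ∀ u, f d u = 0}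
        ∩ ({f | ∀ d ∈ N.sinks, inflow f d ≤ (N.sinkCap d : ℝ)}
        ∩ {f | ∀ d ∈ N.sinks, inflow f d ≤ x d}))))) := by
      ext f
      simp only [hK, Set.mem_setOf_eq, Set.mem_inter_iff, IsFlow]
      tauto
    rw [hKdef]
    exact c1.inter (c2.inter (c3.inter (c4.inter (c5.inter c6))))
  have hBox : IsCompact (Set.univ.pi fun u : V =>
      Set.univ.pi fun w : V => Set.Icc (0:ℝ) (N.cap u w : ℝ)) :=
    isCompact_univ_pi fun u => isCompact_univ_pi fun w => isCompact_Icc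
  have hsub : K ⊆ Set.univ.pi fun u : V =>
      Set.univ.pi fun w : V => Set.Icc (0:ℝ) (N.cap u w : ℝ) := by
    intro f hf
    simp only [Set.mem_pi, Set.mem_univ, forall_true_left, Set.mem_Icc]
    intro u w
    exact ⟨hf.1.1 u w, hf.1.2.1 u w⟩
  have hKcomp : IsCompact K := hBox.of_isClosed_subset hKclosed hsub
  have hne : K.Nonempty := by
    refine ⟨fun _ _ => 0, ⟨⟨fun u w => le_refl 0, fun u w => Nat.cast_nonneg _,
      fun y _ _ => by simp [inflow, outflow], fun d _ u => rfl, fun d _ => ?_⟩, fun d hd => ?_⟩⟩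
    · simp [inflow]
    · simp only [inflow, Finset.sum_const_zero]
      exact hx0 d hd
  have hΦ : Continuous fun f : V → V → ℝ => ∑ d ∈ N.sinks, inflow f d :=
    continuous_finset_sum _ fun d _ => hcont_in d
  obtain ⟨f, hfK, hmax⟩ := hKcomp.exists_isMaxOn hne hΦ.continuousOn
  exact ⟨f, hfK, fun g hg1 hg2 => hmax (Set.mem_setOf_eq ▸ ⟨hg1, hg2⟩)⟩


end MegiddoAux

/-- Megiddo's achievability characterization: a vector `h` on the sinks is
achievable (i.e. `h d = β d − f(d)` for some feasible flow `f`) if and only if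
`h d ≤ β d` for every sink and `h(B) ≥ w(B) = β(B) − v(B)` for every `B ⊆ D`,
where `v B` is the maximum flow into the sinks in `B`. -/
theorem achievability_characterization
    {V : Type*} [Fintype V] [DecidableEq V] (N : FlowNetwork V)
    (v : Finset V → ℝ)
    (hv : ∀ B ⊆ N.sinks,
      (∃ f, IsFlow N f ∧ ∑ d ∈ B, inflow f d = v B) ∧
      (∀ f, IsFlow N f → ∑ d ∈ B, inflow f d ≤ v B))
    (w : Finset V → ℝ)
    (hw : ∀ B : Finset V, w B = (∑ k ∈ B, (N.sinkCap k : ℝ)) - v B)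
    (h : V → ℝ) :
    (∃ f, IsFlow N f ∧ ∀ d ∈ N.sinks, h d = (N.sinkCap d : ℝ) - inflow f d) ↔
    ((∀ d ∈ N.sinks, h d ≤ (N.sinkCap d : ℝ)) ∧
      (∀ B ⊆ N.sinks, w B ≤ ∑ d ∈ B, h d)) := by
  constructor
  · rintro ⟨f, hfF, hfd⟩
    constructor
    · intro d hd
      rw [hfd d hd]
      have h0 : 0 ≤ inflow f d := Finset.sum_nonneg fun u _ => hfF.1 u d
      linarith
    · intro B hB
      rw [hw B]
      have hle : ∑ d ∈ B, inflow f d ≤ v B := (hv B hB).2 f hfF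
      have heq : ∑ d ∈ B, h d
          = ∑ d ∈ B, (N.sinkCap d : ℝ) - ∑ d ∈ B, inflow f d := by
        rw [← Finset.sum_sub_distrib]
        exact Finset.sum_congr rfl fun d hd => hfd d (hB hd)
      rw [heq]
      linarith
  · rintro ⟨h1, h2⟩
    classical
    set x : V → ℝ := fun d => (N.sinkCap d : ℝ) - h d with hxdef
    have hx0 : ∀ d ∈ N.sinks, 0 ≤ x d := by
      intro d hd
      have := h1 d hd
      simp only [hxdef]
      linarith
    have hxB : ∀ B ⊆ N.sinks, ∑ d ∈ B, x d ≤ v B := by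
      intro B hB
      have hwB := h2 B hB
      rw [hw B] at hwB
      have hsum : ∑ d ∈ B, x d
          = ∑ d ∈ B, (N.sinkCap d : ℝ) - ∑ d ∈ B, h d := by
        rw [← Finset.sum_sub_distrib]
      linarith
    obtain ⟨f, ⟨hfF, hfle⟩, hmax⟩ := exists_max_flow N x hx0
    -- the max flow achieves inflow f d = x d at every sink
    have hkey : ∀ d ∈ N.sinks, inflow f d = x d := by
      by_contra hke
      push_neg at hke
      obtain ⟨d0, hd0, hne0⟩ := hke
      have hlt0 : inflow f d0 < x d0 := lt_of_le_of_ne (hfle d0 hd0) hne0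
      obtain ⟨hf0, hfc, hfcons, hfs, hfcap⟩ := hfF
      set R : Set V := {y | Relation.ReflTransGen (Res N f) N.source y} with hR
      by_cases hreach : ∃ d ∈ N.sinks, d ∈ R ∧ inflow f d < x d
      · -- augment along a residual path: contradicts maximality
        obtain ⟨d, hd, hdR, hdlt⟩ := hreach
        have hsd : N.source ≠ d := fun hh => N.source_not_sink (hh ▸ hd)
        obtain ⟨l0, hchain0, hlast0⟩ := List.exists_isChain_cons_of_relationReflTransGen hdR
        obtain ⟨l, hchain, hnd, hlast⟩ := chain_nodup l0 N.source hchain0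
        have hlastd : (N.source :: l).getLast? = some d := by
          rw [hlast, List.getLast?_eq_getLast_of_ne_nil (List.cons_ne_nil _ _), hlast0]
        have hlne : l ≠ [] := by
          rintro rfl
          simp only [List.getLast?_singleton, Option.some_inj] at hlastd
          exact hsd hlastd
        have hlastd' : l.getLast? = some d := by
          cases l with
          | nil => exact absurd rfl hlne
          | cons a t => rwa [List.getLast?_cons_cons] at hlastd
        have hδ : (0:ℝ) < x d - inflow f d := by linarith
        obtain ⟨ε, g, hε0, hεδ, cond⟩ :=
          aug N l N.source d f hf0 hfc hfs hchain hnd hlastd' (x d - inflow f d) hδ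
        obtain ⟨g0, gc, gs, goff, gnet, gnu, gnd, gsin, gku, gkd⟩ := cond
        have hsrc_ne : ∀ s ∈ N.sinks, s ≠ N.source :=
          fun s hs hh => N.source_not_sink (hh ▸ hs)
        have hind : inflow g d = inflow f d + ε := gkd hd
        have hinothers : ∀ s ∈ N.sinks, s ≠ d → inflow g s = inflow f s :=
          fun s hs hsd' => gsin s hs (hsrc_ne s hs) hsd'
        have hvd : v {d} ≤ (N.sinkCap d : ℝ) := by
          obtain ⟨⟨f1, hf1F, hf1v⟩, _⟩ := hv {d} (Finset.singleton_subset_iff.mpr hd)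
          rw [← hf1v, Finset.sum_singleton]
          exact hf1F.2.2.2.2 d hd
        have hxd : x d ≤ (N.sinkCap d : ℝ) := by
          have := hxB {d} (Finset.singleton_subset_iff.mpr hd)
          rw [Finset.sum_singleton] at this
          linarith
        have hgF : IsFlow N g := by
          refine ⟨g0, gc, ?_, gs, ?_⟩
          · intro y hy1 hy2
            have h5 := gnet y hy1 (fun hh => hy2 (hh ▸ hd))
            have h6 := hfcons y hy1 hy2
            linarith
          · intro s hs
            by_cases hsd' : s = d
            · subst hsd'
              rw [hind]
              linarith
            · rw [hinothers s hs hsd']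
              exact hfcap s hs
        have hgle : ∀ s ∈ N.sinks, inflow g s ≤ x s := by
          intro s hs
          by_cases hsd' : s = d
          · subst hsd'
            rw [hind]
            linarith
          · rw [hinothers s hs hsd']
            exact hfle s hs
        have hcontra := hmax g hgF hgle
        have hsum : ∑ s ∈ N.sinks, inflow g s = (∑ s ∈ N.sinks, inflow f s) + ε := by
          rw [← Finset.add_sum_erase _ _ hd, ← Finset.add_sum_erase _ (fun s => inflow f s) hd,
            hind]
          have he : ∑ s ∈ N.sinks.erase d, inflow g s
              = ∑ s ∈ N.sinks.erase d, inflow f s :=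
            Finset.sum_congr rfl fun s hs =>
              hinothers s (Finset.mem_of_mem_erase hs) (Finset.ne_of_mem_erase hs)
          rw [he]
          ring
        rw [hsum] at hcontra
        linarith
      · -- a saturated cut separates the deficient sinks: contradicts `hxB`
        push_neg at hreach
        have hd0R : d0 ∉ R := fun hh => absurd hlt0 (not_lt.mpr (hreach d0 hd0 hh))
        set B' := N.sinks.filter (fun d => ¬ d ∈ R) with hB'
        have hB'sub : B' ⊆ N.sinks := Finset.filter_subset _ _
        have hd0B' : d0 ∈ B' := Finset.mem_filter.mpr ⟨hd0, hd0R⟩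
        obtain ⟨⟨g2, hg2F, hg2v⟩, _⟩ := hv B' hB'sub
        have hcut := cut_bound N f g2 ⟨hf0, hfc, hfcons, hfs, hfcap⟩ hg2F
          (fun y => y ∈ R) Relation.ReflTransGen.refl
          (fun a b ha hab => Relation.ReflTransGen.tail ha hab)
        have hltB : ∑ d ∈ B', inflow f d < ∑ d ∈ B', x d := by
          refine Finset.sum_lt_sum (fun i hi => hfle i (hB'sub hi)) ⟨d0, hd0B', hlt0⟩
        have hxBle := hxB B' hB'sub
        rw [hB'] at hg2v hltB hxBle
        linarith [hg2v ▸ hcut]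
    refine ⟨f, hfF, fun d hd => ?_⟩
    rw [hkey d hd]
    simp [hxdef]
end
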